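/- arXiv:2507.04515 — 12 statements merged into one kernel-verified Lean document; each statement's English description precedes it below -/
import Mathlib

section
/- Let Q ∈ ℝ^{n_y×n_y} be symmetric positive definite, q ∈ ℝ^{n_y}, G ∈ ℝ^{n_g×n_y}, g ∈ ℝ^{n_g}, and ρ ∈ ℝ^{n_g} with every component positive. Define H = diag(ρ)·G·Q⁻¹·Gᵀ·diag(ρ) and h = diag(ρ)·(G·Q⁻¹·Gᵀ·ρ + 2·(G·Q⁻¹·q + g)). Then the ℓ1-penalty soft-constrained problem min over y ∈ ℝ^{n_y} of (1/2)yᵀQy + yᵀq + Σᵢ ρᵢ·max(0, (Gy − g)ᵢ) has a unique minimizer y*, and for any minimizer z* of the box-constrained quadratic program min over z ∈ ℝ^{n_g} with −e ≤ z ≤ e of (1/2)zᵀHz + zᵀh, one has y* = −Q⁻¹(q + (1/2)·Gᵀ(ρ ⊙ z* + ρ)). -/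
/-!
For `z` in the box, `λ = ½ (ρ ⊙ z + ρ)` lies between `0` and `ρ`, so `ρᵢ max(0, sᵢ) ≥ λᵢ sᵢ` and the
penalty objective `f` dominates the Lagrangian `L(y) = ½ yᵀQy + yᵀq + λᵀ(Gy - g)`, whose
unconstrained minimiser is `y_z = -Q⁻¹(q + Gᵀλ)`. The Box-QP is the dual problem: its gradient at
`z` is `-2 ρ ⊙ (G y_z - g)`, so optimality of `z` over the box says that `z` maximises the linear
form `Σ ρᵢ (G y_z - g)ᵢ zᵢ` there, which is complementary slackness `Σ ρᵢ max(0, (G y_z - g)ᵢ) =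
λᵀ(G y_z - g)`. Hence `f y ≥ L y = L y_z + ½ (y - y_z)ᵀQ(y - y_z) ≥ f y_z + ½ (y - y_z)ᵀQ(y - y_z)`,
which gives minimality of `y_z` and, `Q` being positive definite, uniqueness of the minimiser.
-/

open Matrix Filter Topology

variable {n : Type*} [Fintype n]

noncomputable def quadraticObjective (H : Matrix n n ℝ) (h z : n → ℝ) : ℝ :=
  1 / 2 * (z ⬝ᵥ H *ᵥ z) + z ⬝ᵥ h

theorem quadraticObjective_add {H : Matrix n n ℝ} (hH : H.IsSymm) (h z d : n → ℝ) :
    quadraticObjective H h (z + d)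
      = quadraticObjective H h z + (H *ᵥ z + h) ⬝ᵥ d + 1 / 2 * (d ⬝ᵥ H *ᵥ d) := by
  have hsymm : d ⬝ᵥ H *ᵥ z = z ⬝ᵥ H *ᵥ d := by
    rw [dotProduct_mulVec, ← mulVec_transpose, hH.eq, dotProduct_comm]
  simp only [quadraticObjective, mulVec_add, dotProduct_add, add_dotProduct, hsymm]
  rw [dotProduct_comm h d, dotProduct_comm (H *ᵥ z) d, hsymm]
  ring

theorem nonneg_of_forall_mul_add_sq_nonneg {a b ε : ℝ} (hε : 0 < ε)
    (h : ∀ s ∈ Set.Ioc 0 ε, 0 ≤ s * a + s ^ 2 * b) : 0 ≤ a := by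
  have hlim : Tendsto (fun s => a + s * b) (𝓝[>] 0) (𝓝 a) := by
    have : Continuous fun s : ℝ => a + s * b := by fun_prop
    simpa using (this.tendsto 0).mono_left nhdsWithin_le_nhds
  refine ge_of_tendsto hlim ?_
  filter_upwards [Ioo_mem_nhdsGT hε] with s hs
  refine nonneg_of_mul_nonneg_right ?_ hs.1
  linear_combination h s ⟨hs.1, hs.2.le⟩

theorem IsMinOn.quadraticObjective_gradient_nonneg {H : Matrix n n ℝ} (hH : H.IsSymm)
    {h z : n → ℝ} {S : Set (n → ℝ)} (hS : Convex ℝ S) (hz : z ∈ S)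
    (hmin : IsMinOn (quadraticObjective H h) S z) {z' : n → ℝ} (hz' : z' ∈ S) :
    0 ≤ (H *ᵥ z + h) ⬝ᵥ (z' - z) := by
  refine nonneg_of_forall_mul_add_sq_nonneg (b := 1 / 2 * ((z' - z) ⬝ᵥ H *ᵥ (z' - z)))
    one_pos fun s hs => ?_
  have hmem : z + s • (z' - z) ∈ S := hS.add_smul_sub_mem hz hz' ⟨hs.1.le, hs.2⟩
  have := isMinOn_iff.mp hmin _ hmem
  rw [quadraticObjective_add hH] at this
  simp only [dotProduct_smul, smul_dotProduct, mulVec_smul, smul_eq_mul] at this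
  linear_combination this

theorem exists_isMinOn_quadraticObjective_Icc (H : Matrix n n ℝ) (h : n → ℝ) :
    ∃ z ∈ Set.Icc (-1 : n → ℝ) 1, IsMinOn (quadraticObjective H h) (Set.Icc (-1) 1) z := by
  refine isCompact_Icc.exists_isMinOn (Set.nonempty_Icc.mpr (neg_le_self zero_le_one)) ?_
  exact (continuous_const.mul (continuous_id.dotProduct (continuous_const.matrix_mulVec
    continuous_id)) |>.add (continuous_id.dotProduct continuous_const)).continuousOn

section Penalty

variable {m : Type*} [Fintype m]

theorem half_dotProduct_le_sum_max_zero {ρ z : m → ℝ} (hρ : ∀ i, 0 ≤ ρ i)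
    (hz : z ∈ Set.Icc (-1) 1) (s : m → ℝ) :
    1 / 2 * ((ρ * z + ρ) ⬝ᵥ s) ≤ ∑ i, ρ i * max 0 (s i) := by
  rw [dotProduct, Finset.mul_sum]
  refine Finset.sum_le_sum fun i _ => ?_
  have hzi : -1 ≤ z i ∧ z i ≤ 1 := ⟨hz.1 i, hz.2 i⟩
  have : (z i + 1) / 2 * s i ≤ max 0 (s i) := by
    rcases le_total 0 (s i) with hs | hs
    · nlinarith [le_max_right 0 (s i)]
    · nlinarith [le_max_left 0 (s i)]
  simp only [Pi.add_apply, Pi.mul_apply]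
  nlinarith [mul_le_mul_of_nonneg_left this (hρ i)]

theorem sum_max_zero_le_half_dotProduct {ρ z s : m → ℝ}
    (hmax : ∀ z' ∈ Set.Icc (-1 : m → ℝ) 1, (ρ * s) ⬝ᵥ z' ≤ (ρ * s) ⬝ᵥ z) :
    ∑ i, ρ i * max 0 (s i) ≤ 1 / 2 * ((ρ * z + ρ) ⬝ᵥ s) := by
  classical
  let sgn : m → ℝ := fun i => if 0 ≤ s i then 1 else -1
  have hsgn : sgn ∈ Set.Icc (-1) 1 := by
    constructor <;> intro i <;> by_cases hs : 0 ≤ s i <;> simp [sgn, hs]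
  have hmax_sgn : ∀ i, ρ i * max 0 (s i) = 1 / 2 * (ρ i * s i * sgn i + ρ i * s i) := by
    intro i
    by_cases hs : 0 ≤ s i
    · simp only [sgn, hs, if_true, max_eq_right hs]; ring
    · simp only [sgn, hs, if_false, max_eq_left (not_le.mp hs).le]; ring
  have hsgn_le := hmax sgn hsgn
  simp only [dotProduct, Pi.mul_apply] at hsgn_le
  calc ∑ i, ρ i * max 0 (s i) = 1 / 2 * (∑ i, ρ i * s i * sgn i + ∑ i, ρ i * s i) := by
        rw [Finset.sum_congr rfl fun i _ => hmax_sgn i, ← Finset.mul_sum, Finset.sum_add_distrib]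
    _ ≤ 1 / 2 * (∑ i, ρ i * s i * z i + ∑ i, ρ i * s i) := by linarith
    _ = 1 / 2 * ((ρ * z + ρ) ⬝ᵥ s) := by
        rw [← Finset.sum_add_distrib, dotProduct]
        refine congrArg _ (Finset.sum_congr rfl fun i _ => ?_)
        simp only [Pi.add_apply, Pi.mul_apply]
        ring

variable [DecidableEq n]

noncomputable def penaltyObjective (Q : Matrix n n ℝ) (q : n → ℝ) (G : Matrix m n ℝ)
    (g ρ : m → ℝ) (y : n → ℝ) : ℝ :=
  quadraticObjective Q q y + ∑ i, ρ i * max 0 ((G *ᵥ y - g) i)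

noncomputable def boxQPMatrix [DecidableEq m] (Q : Matrix n n ℝ) (G : Matrix m n ℝ) (ρ : m → ℝ) :
    Matrix m m ℝ :=
  diagonal ρ * G * Q⁻¹ * Gᵀ * diagonal ρ

noncomputable def boxQPVector [DecidableEq m] (Q : Matrix n n ℝ) (q : n → ℝ) (G : Matrix m n ℝ)
    (g ρ : m → ℝ) : m → ℝ :=
  diagonal ρ *ᵥ ((G * Q⁻¹ * Gᵀ) *ᵥ ρ + (2 : ℝ) • ((G * Q⁻¹) *ᵥ q + g))

noncomputable def recoverPrimal (Q : Matrix n n ℝ) (q : n → ℝ) (G : Matrix m n ℝ)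
    (ρ z : m → ℝ) : n → ℝ :=
  -(Q⁻¹ *ᵥ (q + (1 / 2 : ℝ) • Gᵀ *ᵥ (ρ * z + ρ)))

variable {Q : Matrix n n ℝ} {q : n → ℝ} {G : Matrix m n ℝ} {g ρ : m → ℝ}

theorem boxQPMatrix_isSymm [DecidableEq m] (hQ : Q.IsSymm) : (boxQPMatrix Q G ρ).IsSymm := by
  simp only [boxQPMatrix, IsSymm, transpose_mul, transpose_transpose, hQ.inv.eq,
    (isSymm_diagonal ρ).eq, Matrix.mul_assoc]

theorem mulVec_recoverPrimal (hQ : IsUnit Q.det) (z : m → ℝ) :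
    Q *ᵥ recoverPrimal Q q G ρ z = -(q + (1 / 2 : ℝ) • Gᵀ *ᵥ (ρ * z + ρ)) := by
  rw [recoverPrimal, mulVec_neg, mulVec_mulVec, mul_nonsing_inv Q hQ, one_mulVec]

theorem boxQP_gradient_eq [DecidableEq m] (z : m → ℝ) :
    boxQPMatrix Q G ρ *ᵥ z + boxQPVector Q q G g ρ
      = (-2 : ℝ) • (ρ * (G *ᵥ recoverPrimal Q q G ρ z - g)) := by
  have hdiag : ∀ x : m → ℝ, ρ * x = diagonal ρ *ᵥ x := fun x => funext fun i =>
    (mulVec_diagonal ρ x i).symm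
  rw [boxQPMatrix, boxQPVector, recoverPrimal, hdiag, hdiag]
  simp only [← mulVec_mulVec, mulVec_neg, mulVec_add, mulVec_smul, mulVec_sub]
  module

theorem penaltyObjective_recoverPrimal_add_le [DecidableEq m] (hQ : Q.IsSymm)
    (hdet : IsUnit Q.det) (hρ : ∀ i, 0 ≤ ρ i) {z : m → ℝ} (hz : z ∈ Set.Icc (-1) 1)
    (hmin : IsMinOn (quadraticObjective (boxQPMatrix Q G ρ) (boxQPVector Q q G g ρ))
      (Set.Icc (-1) 1) z) (y : n → ℝ) :
    penaltyObjective Q q G g ρ (recoverPrimal Q q G ρ z)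
      + 1 / 2 * ((y - recoverPrimal Q q G ρ z) ⬝ᵥ Q *ᵥ (y - recoverPrimal Q q G ρ z))
      ≤ penaltyObjective Q q G g ρ y := by
  set ys := recoverPrimal Q q G ρ z
  set w := q + (1 / 2 : ℝ) • Gᵀ *ᵥ (ρ * z + ρ)
  have lagrangian : ∀ u, quadraticObjective Q q u + 1 / 2 * ((ρ * z + ρ) ⬝ᵥ (G *ᵥ u - g))
      = quadraticObjective Q w u - 1 / 2 * ((ρ * z + ρ) ⬝ᵥ g) := by
    intro u
    have htranspose : (ρ * z + ρ) ⬝ᵥ G *ᵥ u = u ⬝ᵥ Gᵀ *ᵥ (ρ * z + ρ) := by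
      rw [dotProduct_mulVec, ← mulVec_transpose, dotProduct_comm]
    simp only [quadraticObjective, w, dotProduct_sub, dotProduct_add, dotProduct_smul,
      smul_eq_mul, htranspose]
    ring
  have growth : quadraticObjective Q w y
      = quadraticObjective Q w ys + 1 / 2 * ((y - ys) ⬝ᵥ Q *ᵥ (y - ys)) := by
    have := quadraticObjective_add hQ w ys (y - ys)
    rwa [add_sub_cancel, mulVec_recoverPrimal hdet, neg_add_cancel, zero_dotProduct,
      add_zero] at this
  have penalty_ys : ∑ i, ρ i * max 0 ((G *ᵥ ys - g) i)
      ≤ 1 / 2 * ((ρ * z + ρ) ⬝ᵥ (G *ᵥ ys - g)) := by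
    refine sum_max_zero_le_half_dotProduct fun z' hz' => ?_
    have := hmin.quadraticObjective_gradient_nonneg (boxQPMatrix_isSymm hQ) (convex_Icc _ _)
      hz hz'
    rw [boxQP_gradient_eq, smul_dotProduct, dotProduct_sub, smul_eq_mul] at this
    linarith
  have penalty_y := half_dotProduct_le_sum_max_zero hρ hz (G *ᵥ y - g)
  simp only [penaltyObjective]
  linarith [lagrangian y, lagrangian ys]

theorem penaltyObjective_recoverPrimal_le [DecidableEq m] (hQ : Q.PosDef)
    (hρ : ∀ i, 0 ≤ ρ i) {z : m → ℝ} (hz : z ∈ Set.Icc (-1) 1)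
    (hmin : IsMinOn (quadraticObjective (boxQPMatrix Q G ρ) (boxQPVector Q q G g ρ))
      (Set.Icc (-1) 1) z) (y : n → ℝ) :
    penaltyObjective Q q G g ρ (recoverPrimal Q q G ρ z) ≤ penaltyObjective Q q G g ρ y := by
  have growth := penaltyObjective_recoverPrimal_add_le (isHermitian_iff_isSymm.mp hQ.isHermitian)
    ((isUnit_iff_isUnit_det Q).mp hQ.isUnit) hρ hz hmin y
  have := hQ.posSemidef.dotProduct_mulVec_nonneg (y - recoverPrimal Q q G ρ z)
  rw [star_trivial] at this
  linarith

theorem eq_recoverPrimal_of_forall_le [DecidableEq m] (hQ : Q.PosDef)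
    (hρ : ∀ i, 0 ≤ ρ i) {z : m → ℝ} (hz : z ∈ Set.Icc (-1) 1)
    (hmin : IsMinOn (quadraticObjective (boxQPMatrix Q G ρ) (boxQPVector Q q G g ρ))
      (Set.Icc (-1) 1) z) {y' : n → ℝ}
    (hy' : ∀ y, penaltyObjective Q q G g ρ y' ≤ penaltyObjective Q q G g ρ y) :
    y' = recoverPrimal Q q G ρ z := by
  by_contra hne
  have growth := penaltyObjective_recoverPrimal_add_le (isHermitian_iff_isSymm.mp hQ.isHermitian)
    ((isUnit_iff_isUnit_det Q).mp hQ.isUnit) hρ hz hmin y'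
  have := hQ.dotProduct_mulVec_pos (sub_ne_zero.mpr hne)
  rw [star_trivial] at this
  linarith [hy' (recoverPrimal Q q G ρ z)]

end Penalty

/-- the ℓ1-penalty soft-constrained QP has a unique minimizer `y*`, and for
any minimizer `z*` of the associated Box-QP, `y* = -Q⁻¹ (q + (1/2) Gᵀ (ρ ⊙ z* + ρ))`. -/
theorem l1_penalty_recovery {ny ng : ℕ}
    (Q : Matrix (Fin ny) (Fin ny) ℝ) (hQ : Q.PosDef)
    (q : Fin ny → ℝ) (G : Matrix (Fin ng) (Fin ny) ℝ) (g ρ : Fin ng → ℝ)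
    (hρ : ∀ i, 0 < ρ i)
    (H : Matrix (Fin ng) (Fin ng) ℝ)
    (hH : H = Matrix.diagonal ρ * G * Q⁻¹ * Gᵀ * Matrix.diagonal ρ)
    (h : Fin ng → ℝ)
    (hh : h = (Matrix.diagonal ρ).mulVec
      ((G * Q⁻¹ * Gᵀ).mulVec ρ + (2:ℝ) • ((G * Q⁻¹).mulVec q + g)))
    (f : (Fin ny → ℝ) → ℝ)
    (hf : f = fun y => (1/2) * (y ⬝ᵥ Q.mulVec y) + y ⬝ᵥ q
      + ∑ i, ρ i * max 0 ((G.mulVec y - g) i))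
    (qp : (Fin ng → ℝ) → ℝ)
    (hqp : qp = fun z => (1/2) * (z ⬝ᵥ H.mulVec z) + z ⬝ᵥ h) :
    ∃ ystar : Fin ny → ℝ,
      (∀ y, f ystar ≤ f y) ∧
      (∀ y', (∀ y, f y' ≤ f y) → y' = ystar) ∧
      (∀ zstar : Fin ng → ℝ,
        (∀ i, -1 ≤ zstar i ∧ zstar i ≤ 1) →
        (∀ z : Fin ng → ℝ, (∀ i, -1 ≤ z i ∧ z i ≤ 1) → qp zstar ≤ qp z) →
        ystar = -(Q⁻¹.mulVec (q + (1/2 : ℝ) • Gᵀ.mulVec (fun i => ρ i * zstar i + ρ i)))) := by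
  obtain rfl : f = penaltyObjective Q q G g ρ := hf
  obtain rfl : qp = quadraticObjective (boxQPMatrix Q G ρ) (boxQPVector Q q G g ρ) := by
    rw [hqp, hH, hh]; rfl
  have hρ' i := (hρ i).le
  have box_iff (z : Fin ng → ℝ) : z ∈ Set.Icc (-1) 1 ↔ ∀ i, -1 ≤ z i ∧ z i ≤ 1 :=
    ⟨fun hz i => ⟨hz.1 i, hz.2 i⟩, fun hz => ⟨fun i => (hz i).1, fun i => (hz i).2⟩⟩
  obtain ⟨z₀, hz₀, hmin₀⟩ :=
    exists_isMinOn_quadraticObjective_Icc (boxQPMatrix Q G ρ) (boxQPVector Q q G g ρ)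
  refine ⟨recoverPrimal Q q G ρ z₀, penaltyObjective_recoverPrimal_le hQ hρ' hz₀ hmin₀,
    fun y' hy' => eq_recoverPrimal_of_forall_le hQ hρ' hz₀ hmin₀ hy', fun z hz hmin => ?_⟩
  have hz' := (box_iff z).mpr hz
  exact (eq_recoverPrimal_of_forall_le hQ hρ' hz₀ hmin₀ (penaltyObjective_recoverPrimal_le hQ hρ'
    hz' fun z' hz'' => hmin z' ((box_iff z').mp hz''))).symm
end

section
/- Let A ∈ ℝ^{m×n} with m ≥ n and AᵀA invertible, b ∈ ℝ^m, and λ > 0. If z* minimizes (1/2)zᵀ(λ(AᵀA)⁻¹)z + zᵀ(−(AᵀA)⁻¹Aᵀb) over the box {z ∈ ℝ^n : −e ≤ z ≤ e}, then x* = (AᵀA)⁻¹(Aᵀb − λz*) minimizes the Lasso objective (1/2)‖Ax − b‖₂² + λ‖x‖₁ over x ∈ ℝ^n. -/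
open Matrix

private lemma key_real (c x zi : ℝ) (hc : 0 ≤ c) (hz1 : -1 ≤ zi) (hz2 : zi ≤ 1)
    (h : ∀ t : ℝ, -1 ≤ t → t ≤ 1 → 0 ≤ -((t - zi) * x) + (t - zi) ^ 2 * c) :
    |x| ≤ x * zi := by
  rcases lt_trichotomy x 0 with hx | hx | hx
  · have hzi : zi ≤ -1 := by
      by_contra hlt
      push_neg at hlt
      set ε := min (zi + 1) (-x / (2 * c + 1)) with hε
      have hε0 : 0 < ε := lt_min (by linarith) (div_pos (by linarith) (by linarith))
      have h1 : ε ≤ zi + 1 := min_le_left _ _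
      have h2 : ε * (2 * c + 1) ≤ -x := by
        have := min_le_right (zi + 1) (-x / (2 * c + 1))
        rw [hε]
        calc min (zi + 1) (-x / (2 * c + 1)) * (2 * c + 1)
            ≤ (-x / (2 * c + 1)) * (2 * c + 1) :=
              mul_le_mul_of_nonneg_right this (by linarith)
          _ = -x := div_mul_cancel₀ _ (by linarith)
      have H := h (zi - ε) (by linarith) (by linarith)
      nlinarith [H, mul_le_mul_of_nonneg_left h2 hε0.le, mul_pos hε0 hε0]
    have hz : zi = -1 := le_antisymm hzi hz1
    rw [hz, abs_of_neg hx]; linarith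
  · simp [hx]
  · have hzi : 1 ≤ zi := by
      by_contra hlt
      push_neg at hlt
      set ε := min (1 - zi) (x / (2 * c + 1)) with hε
      have hε0 : 0 < ε := lt_min (by linarith) (div_pos hx (by linarith))
      have h1 : ε ≤ 1 - zi := min_le_left _ _
      have h2 : ε * (2 * c + 1) ≤ x := by
        have := min_le_right (1 - zi) (x / (2 * c + 1))
        rw [hε]
        calc min (1 - zi) (x / (2 * c + 1)) * (2 * c + 1)
            ≤ (x / (2 * c + 1)) * (2 * c + 1) :=
              mul_le_mul_of_nonneg_right this (by linarith)
          _ = x := div_mul_cancel₀ _ (by linarith)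
      have H := h (zi + ε) (by linarith) (by linarith)
      nlinarith [H, mul_le_mul_of_nonneg_left h2 hε0.le, mul_pos hε0 hε0]
    have hz : zi = 1 := le_antisymm hz2 hzi
    rw [hz, abs_of_pos hx]; linarith

/-- if `z*` minimizes the Box-QP with `H = λ(AᵀA)⁻¹`, `h = -(AᵀA)⁻¹Aᵀb` over
`-e ≤ z ≤ e`, then `x* = (AᵀA)⁻¹(Aᵀb − λz*)` minimizes the Lasso objective. -/
theorem lasso_recovery {m n : ℕ} (hmn : n ≤ m)
    (A : Matrix (Fin m) (Fin n) ℝ) (b : Fin m → ℝ)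
    (hA : IsUnit (Aᵀ * A).det)
    (lam : ℝ) (hlam : 0 < lam)
    (zstar : Fin n → ℝ)
    (hbox : ∀ i, -1 ≤ zstar i ∧ zstar i ≤ 1)
    (hmin : ∀ z : Fin n → ℝ, (∀ i, -1 ≤ z i ∧ z i ≤ 1) →
      (1/2) * (zstar ⬝ᵥ (lam • (Aᵀ * A)⁻¹).mulVec zstar)
        + zstar ⬝ᵥ (-(Aᵀ * A)⁻¹.mulVec (Aᵀ.mulVec b))
      ≤ (1/2) * (z ⬝ᵥ (lam • (Aᵀ * A)⁻¹).mulVec z)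
        + z ⬝ᵥ (-(Aᵀ * A)⁻¹.mulVec (Aᵀ.mulVec b)))
    (xstar : Fin n → ℝ)
    (hx : xstar = (Aᵀ * A)⁻¹.mulVec (Aᵀ.mulVec b - lam • zstar)) :
    ∀ x : Fin n → ℝ,
      (1/2) * (∑ i, (A.mulVec xstar - b) i ^ 2) + lam * ∑ i, |xstar i|
      ≤ (1/2) * (∑ i, (A.mulVec x - b) i ^ 2) + lam * ∑ i, |x i| := by
  intro x
  set M : Matrix (Fin n) (Fin n) ℝ := Aᵀ * A with hM
  set W : Matrix (Fin n) (Fin n) ℝ := M⁻¹ with hWdef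
  have hMT : Mᵀ = M := by rw [hM, transpose_mul, transpose_transpose]
  have hWT : Wᵀ = W := by rw [hWdef, transpose_nonsing_inv, hMT]
  have hMW : M * W = 1 := mul_nonsing_inv M hA
  -- M x* = Aᵀ b - lam • z*
  have hMx : M.mulVec xstar = Aᵀ.mulVec b - lam • zstar := by
    rw [hx, Matrix.mulVec_mulVec, hMW, Matrix.one_mulVec]
  -- PSD of M
  have hpsd : ∀ v : Fin n → ℝ, 0 ≤ v ⬝ᵥ M.mulVec v := by
    intro v
    have : v ⬝ᵥ M.mulVec v = (A.mulVec v) ⬝ᵥ (A.mulVec v) := by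
      rw [hM, ← Matrix.mulVec_mulVec, Matrix.dotProduct_mulVec, Matrix.vecMul_transpose]
    rw [this]
    exact Finset.sum_nonneg fun i _ => mul_self_nonneg _
  -- nonneg diagonal of W
  have hWdiag : ∀ i, 0 ≤ W i i := by
    intro i
    have h1 : M.mulVec (W.mulVec (Pi.single i 1)) = Pi.single i 1 := by
      rw [Matrix.mulVec_mulVec, hMW, Matrix.one_mulVec]
    have h2 := hpsd (W.mulVec (Pi.single i 1))
    rw [dotProduct_comm, h1] at h2
    simpa [Matrix.mulVec_single, dotProduct_single] using h2
  -- symmetry of dot with W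
  have hsymmdot : ∀ v w : Fin n → ℝ, v ⬝ᵥ W.mulVec w = w ⬝ᵥ W.mulVec v := by
    intro v w
    rw [Matrix.dotProduct_mulVec, ← Matrix.mulVec_transpose, hWT, dotProduct_comm]
  -- gradient identity
  have hgrad : ∀ i, ((lam • W).mulVec zstar) i + (-(W.mulVec (Aᵀ.mulVec b))) i
      = -(xstar i) := by
    intro i
    have : xstar = W.mulVec (Aᵀ.mulVec b) - lam • W.mulVec zstar := by
      rw [hx, Matrix.mulVec_sub, Matrix.mulVec_smul]
    rw [this]
    simp [Matrix.smul_mulVec]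
    ring
  -- key coordinatewise fact
  have hkey : ∀ i, |xstar i| ≤ xstar i * zstar i := by
    intro i
    apply key_real (lam * W i i / 2) (xstar i) (zstar i)
      (by have := hWdiag i; positivity) (hbox i).1 (hbox i).2
    intro t ht1 ht2
    set s : Fin n → ℝ := Pi.single i 1 with hs
    set δ : ℝ := t - zstar i with hδ
    set z : Fin n → ℝ := zstar + δ • s with hz
    have hzbox : ∀ j, -1 ≤ z j ∧ z j ≤ 1 := by
      intro j
      rcases eq_or_ne j i with rfl | hne
      · have hzj : z j = t := by simp [hz, hs, hδ]
        rw [hzj]; exact ⟨ht1, ht2⟩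
      · have hzj : z j = zstar j := by simp [hz, hs, Pi.single_apply, hne]
        rw [hzj]; exact hbox j
    have H := hmin z hzbox
    have e1 : z ⬝ᵥ (lam • W).mulVec z
        = zstar ⬝ᵥ (lam • W).mulVec zstar + δ * (s ⬝ᵥ (lam • W).mulVec zstar)
          + δ * (zstar ⬝ᵥ (lam • W).mulVec s) + δ * (δ * (s ⬝ᵥ (lam • W).mulVec s)) := by
      rw [hz]
      simp only [Matrix.mulVec_add, Matrix.mulVec_smul, dotProduct_add,
        add_dotProduct, dotProduct_smul, smul_dotProduct, smul_eq_mul]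
      ring
    have hsym2 : zstar ⬝ᵥ (lam • W).mulVec s = s ⬝ᵥ (lam • W).mulVec zstar := by
      simp only [Matrix.smul_mulVec, dotProduct_smul, smul_eq_mul]
      rw [hsymmdot]
    have hsQz : s ⬝ᵥ (lam • W).mulVec zstar = ((lam • W).mulVec zstar) i := by
      rw [hs, single_dotProduct, one_mul]
    have hsQs : s ⬝ᵥ (lam • W).mulVec s = lam * W i i := by
      rw [hs]
      simp [Matrix.mulVec_single, single_dotProduct]
    have e2 : z ⬝ᵥ (-(W.mulVec (Aᵀ.mulVec b)))
        = zstar ⬝ᵥ (-(W.mulVec (Aᵀ.mulVec b))) + δ * (-(W.mulVec (Aᵀ.mulVec b))) i := by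
      rw [hz]
      simp only [add_dotProduct, smul_dotProduct, smul_eq_mul, hs,
        single_dotProduct, one_mul]
    rw [e1, hsym2, hsQz, hsQs, e2] at H
    have e4 : δ * (((lam • W).mulVec zstar) i + (-(W.mulVec (Aᵀ.mulVec b))) i)
        = δ * (-xstar i) := by rw [hgrad i]
    clear_value δ s z
    linarith [H, e4]
  -- bound x ⬝ z* ≤ ∑ |x i|
  have hz_le : ∀ v : Fin n → ℝ, v ⬝ᵥ zstar ≤ ∑ i, |v i| := by
    intro v
    have : v ⬝ᵥ zstar = ∑ i, v i * zstar i := rfl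
    rw [this]
    apply Finset.sum_le_sum
    intro i _
    calc v i * zstar i ≤ |v i * zstar i| := le_abs_self _
      _ = |v i| * |zstar i| := abs_mul _ _
      _ ≤ |v i| * 1 := by
          apply mul_le_mul_of_nonneg_left _ (abs_nonneg _)
          exact abs_le.2 ⟨(hbox i).1, (hbox i).2⟩
      _ = |v i| := mul_one _
  have hxz : ∑ i, |xstar i| ≤ xstar ⬝ᵥ zstar := by
    have : xstar ⬝ᵥ zstar = ∑ i, xstar i * zstar i := rfl
    rw [this]
    exact Finset.sum_le_sum fun i _ => hkey i
  -- quadratic expansion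
  set d : Fin n → ℝ := x - xstar with hd
  set r : Fin m → ℝ := A.mulVec xstar - b with hr
  have hAxb : A.mulVec x - b = A.mulVec d + r := by
    rw [hd, Matrix.mulVec_sub, hr]; abel
  have hAtr : Aᵀ.mulVec r = -(lam • zstar) := by
    rw [hr, Matrix.mulVec_sub, Matrix.mulVec_mulVec, ← hM, hMx]
    abel
  have hsq : ∀ (k : ℕ) (v : Fin k → ℝ), ∑ i, v i ^ 2 = v ⬝ᵥ v := by
    intro k v
    have : v ⬝ᵥ v = ∑ i, v i * v i := rfl
    rw [this]
    exact Finset.sum_congr rfl fun i _ => pow_two (v i)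
  have hdr : (A.mulVec d) ⬝ᵥ r = -(lam * (x ⬝ᵥ zstar)) + lam * (xstar ⬝ᵥ zstar) := by
    rw [dotProduct_comm, Matrix.dotProduct_mulVec, ← Matrix.mulVec_transpose, hAtr]
    rw [neg_dotProduct, smul_dotProduct, smul_eq_mul, hd,
      dotProduct_sub, dotProduct_comm zstar x, dotProduct_comm zstar xstar]
    ring
  have hsum1 : ∑ i, (A.mulVec x - b) i ^ 2
      = (A.mulVec d) ⬝ᵥ (A.mulVec d) - 2 * (lam * (x ⬝ᵥ zstar))
        + 2 * (lam * (xstar ⬝ᵥ zstar)) + ∑ i, r i ^ 2 := by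
    rw [hAxb, hsq, hsq, dotProduct_add, add_dotProduct, add_dotProduct,
      dotProduct_comm r (A.mulVec d), hdr]
    ring
  have hsum0 : ∑ i, (A.mulVec xstar - b) i ^ 2 = ∑ i, r i ^ 2 := by rw [hr]
  have h1 : 0 ≤ (A.mulVec d) ⬝ᵥ (A.mulVec d) :=
    Finset.sum_nonneg fun i _ => mul_self_nonneg _
  have p2 : lam * (x ⬝ᵥ zstar) ≤ lam * ∑ i, |x i| :=
    mul_le_mul_of_nonneg_left (hz_le x) hlam.le
  have p3 : lam * ∑ i, |xstar i| ≤ lam * (xstar ⬝ᵥ zstar) :=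
    mul_le_mul_of_nonneg_left hxz hlam.le
  rw [hsum1, hsum0]
  linarith
end

section
/- Let n ∈ ℕ₊, α ∈ (0,1), h̃ ∈ ℝ^n with ‖h̃‖∞ = 1, and λ = α/√(2n). Define γ⁰ = e − λh̃, θ⁰ = e + λh̃, φ⁰ = e, ψ⁰ = e, and set x⁰ = col(γ⁰, θ⁰) ∈ ℝ^{2n}, s⁰ = col(φ⁰, ψ⁰) ∈ ℝ^{2n}. Then every component of x⁰ and of s⁰ is positive, and ‖x⁰ ⊙ s⁰ − e‖ ≤ α, where e ∈ ℝ^{2n} is the all-ones vector and ‖·‖ is the Euclidean norm. -/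
/-- the cost-free initialization point is strictly positive and lies in the
central-path neighborhood: `‖x⁰ ⊙ s⁰ − e‖ ≤ α`. -/
theorem initialization_in_neighborhood (n : ℕ) (hn : 0 < n)
    (α : ℝ) (hα : α ∈ Set.Ioo (0:ℝ) 1)
    (htilde : Fin n → ℝ)
    (hinf : (∀ i, |htilde i| ≤ 1) ∧ ∃ i, |htilde i| = 1)
    (lam : ℝ) (hlam : lam = α / Real.sqrt (2 * n))
    (x0 s0 : Fin n ⊕ Fin n → ℝ)
    (hx0 : x0 = Sum.elim (fun i => 1 - lam * htilde i) (fun i => 1 + lam * htilde i))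
    (hs0 : s0 = Sum.elim (fun _ => 1) (fun _ => 1)) :
    (∀ i, 0 < x0 i) ∧ (∀ i, 0 < s0 i) ∧
    Real.sqrt (∑ i, (x0 i * s0 i - 1) ^ 2) ≤ α := by
  obtain ⟨hα0, hα1⟩ := hα
  have h2n : (0:ℝ) < 2 * n := by positivity
  have hs2 : (1:ℝ) ≤ Real.sqrt (2 * n) := by
    rw [show (1:ℝ) = Real.sqrt 1 by simp]
    apply Real.sqrt_le_sqrt
    have : (1:ℝ) ≤ (n:ℝ) := by exact_mod_cast hn
    linarith
  have hsqpos : (0:ℝ) < Real.sqrt (2 * n) := lt_of_lt_of_le one_pos hs2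
  have hlam_pos : 0 < lam := by rw [hlam]; positivity
  have hlam_lt : lam < 1 := by
    rw [hlam, div_lt_one hsqpos]; linarith
  have hbound : ∀ i, |lam * htilde i| < 1 := by
    intro i
    rw [abs_mul, abs_of_pos hlam_pos]
    calc lam * |htilde i| ≤ lam * 1 := by
          exact mul_le_mul_of_nonneg_left (hinf.1 i) hlam_pos.le
      _ < 1 := by linarith
  refine ⟨?_, ?_, ?_⟩
  · intro i
    rcases i with i | i <;> simp only [hx0, Sum.elim_inl, Sum.elim_inr]
    · have := hbound i; have := abs_lt.mp (hbound i); linarith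
    · have := abs_lt.mp (hbound i); linarith
  · intro i; rcases i with i | i <;> simp [hs0]
  · have hsum : ∑ i, (x0 i * s0 i - 1) ^ 2
        = ∑ i : Fin n, (lam * htilde i) ^ 2 + ∑ i : Fin n, (lam * htilde i) ^ 2 := by
      rw [Fintype.sum_sum_type]
      congr 1 <;> apply Finset.sum_congr rfl <;> intro i _ <;>
        simp [hx0, hs0] <;> ring
    have hterm : ∀ i : Fin n, (lam * htilde i) ^ 2 ≤ lam ^ 2 := by
      intro i
      have h1 : (lam * htilde i) ^ 2 = lam ^ 2 * (htilde i) ^ 2 := by ring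
      rw [h1]
      have : (htilde i) ^ 2 ≤ 1 := by
        have := hinf.1 i
        nlinarith [abs_nonneg (htilde i), sq_abs (htilde i)]
      nlinarith [sq_nonneg lam]
    have hsumle : ∑ i : Fin n, (lam * htilde i) ^ 2 ≤ n * lam ^ 2 := by
      calc ∑ i : Fin n, (lam * htilde i) ^ 2 ≤ ∑ _i : Fin n, lam ^ 2 :=
            Finset.sum_le_sum fun i _ => hterm i
        _ = n * lam ^ 2 := by simp [Finset.sum_const, mul_comm]
    have hlamsq : lam ^ 2 = α ^ 2 / (2 * n) := by
      rw [hlam, div_pow, Real.sq_sqrt h2n.le]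
    have htotal : ∑ i, (x0 i * s0 i - 1) ^ 2 ≤ α ^ 2 := by
      rw [hsum]
      have : (n:ℝ) * lam ^ 2 + n * lam ^ 2 = α ^ 2 := by
        rw [hlamsq]; field_simp; ring
      linarith
    calc Real.sqrt (∑ i, (x0 i * s0 i - 1) ^ 2) ≤ Real.sqrt (α ^ 2) :=
          Real.sqrt_le_sqrt htotal
      _ = α := by rw [Real.sqrt_sq hα0.le]
end

section
/- Let N ∈ ℕ₊, α ∈ (0,1), δ ≥ 0, τ > 0, and let x, s, x̃, s̃ ∈ ℝ^N have all components positive. Assume ‖x ⊙ s − τe‖ ≤ ατ, and assume x̃ᵢ/xᵢ ∈ [1/(1+δ), 1+δ] and s̃ᵢ/sᵢ ∈ [1/(1+δ), 1+δ] for every i. Define r = (x̃ ⊙ s̃)^{−1/2} ⊙ (τe − x ⊙ s). Then ‖r‖ ≤ (1+δ)·α·(1−α)^{−1/2}·τ^{1/2}. -/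
/-!
Centrality gives `|xᵢsᵢ - τ| ≤ ‖x ⊙ s - τe‖ ≤ ατ`, hence `xᵢsᵢ ≥ (1 - α)τ`. The ratio bounds
lose at most a factor `(1 + δ)²` in the product, so `x̃ᵢs̃ᵢ ≥ (1 - α)τ / (1 + δ)²` and every weight
`(x̃ᵢs̃ᵢ)^{-1/2}` is at most `(1 + δ) / √((1 - α)τ)`. Multiplying by `‖τe - x ⊙ s‖ ≤ ατ` gives the bound.
-/

section SumSq

variable {ι : Type*} [Fintype ι]

lemma abs_le_sqrt_sum_sq (f : ι → ℝ) (i : ι) : |f i| ≤ √(∑ j, f j ^ 2) :=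
  Real.abs_le_sqrt (Finset.single_le_sum (fun j _ => sq_nonneg (f j)) (Finset.mem_univ i))

lemma sqrt_sum_sq_le_mul_of_abs_le {f g : ι → ℝ} {c : ℝ} (hc : 0 ≤ c)
    (h : ∀ i, |g i| ≤ c * |f i|) : √(∑ i, g i ^ 2) ≤ c * √(∑ i, f i ^ 2) := by
  rw [← Real.sqrt_sq hc, ← Real.sqrt_mul (sq_nonneg c), Finset.mul_sum]
  gcongr with i
  rw [← sq_abs (g i), ← sq_abs (f i), ← mul_pow]
  exact pow_le_pow_left₀ (abs_nonneg _) (h i) 2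

end SumSq

lemma div_le_of_one_div_le_div {a b c : ℝ} (hb : 0 < b) (h : 1 / c ≤ a / b) : b / c ≤ a := by
  rwa [le_div_iff₀ hb, one_div_mul_eq_div] at h

lemma inv_sqrt_mul_le_of_one_div_le_div {x s xt st m c : ℝ} (hx : 0 < x) (hs : 0 < s)
    (hc : 0 < c) (hm : 0 < m) (hxs : m ≤ x * s)
    (hxt : 1 / c ≤ xt / x) (hst : 1 / c ≤ st / s) :
    (√(xt * st))⁻¹ ≤ c / √m := by
  have hxt' := div_le_of_one_div_le_div hx hxt
  have hst' := div_le_of_one_div_le_div hs hst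
  have hprod : m / c ^ 2 ≤ xt * st :=
    calc m / c ^ 2 ≤ x * s / c ^ 2 := by gcongr
      _ = x / c * (s / c) := by rw [sq, mul_div_mul_comm]
      _ ≤ xt * st := mul_le_mul hxt' hst' (by positivity) ((div_pos hx hc).le.trans hxt')
  calc (√(xt * st))⁻¹ ≤ (√(m / c ^ 2))⁻¹ :=
        inv_anti₀ (by positivity) (Real.sqrt_le_sqrt hprod)
    _ = c / √m := by
        rw [Real.sqrt_div hm.le, Real.sqrt_sq hc.le, inv_div]

theorem residual_norm_bound_general (N : ℕ)
    (α δ τ : ℝ) (hα : α ∈ Set.Ioo (0:ℝ) 1) (hδ : 0 ≤ δ) (hτ : 0 < τ)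
    (x s xt st : Fin N → ℝ)
    (hx : ∀ i, 0 < x i) (hs : ∀ i, 0 < s i)
    (hcen : Real.sqrt (∑ i, (x i * s i - τ) ^ 2) ≤ α * τ)
    (hratx : ∀ i, xt i / x i ∈ Set.Icc (1 / (1 + δ)) (1 + δ))
    (hrats : ∀ i, st i / s i ∈ Set.Icc (1 / (1 + δ)) (1 + δ))
    (r : Fin N → ℝ)
    (hr : r = fun i => (Real.sqrt (xt i * st i))⁻¹ * (τ - x i * s i)) :
    Real.sqrt (∑ i, r i ^ 2) ≤ (1 + δ) * α * (Real.sqrt (1 - α))⁻¹ * Real.sqrt τ := by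
  have h1α : 0 < 1 - α := sub_pos.2 hα.2
  have hm : 0 < (1 - α) * τ := mul_pos h1α hτ
  have hlow : ∀ i, (1 - α) * τ ≤ x i * s i := fun i => by
    have := (abs_le_sqrt_sum_sq (fun j => x j * s j - τ) i).trans hcen
    linarith [(abs_le.1 this).1]
  have hweight : ∀ i, |r i| ≤ (1 + δ) / √((1 - α) * τ) * |x i * s i - τ| := fun i => by
    rw [hr, abs_mul, abs_sub_comm, abs_of_nonneg (by positivity)]
    exact mul_le_mul_of_nonneg_right (inv_sqrt_mul_le_of_one_div_le_div (hx i) (hs i)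
      (by positivity) hm (hlow i) (hratx i).1 (hrats i).1) (abs_nonneg _)
  calc √(∑ i, r i ^ 2) ≤ (1 + δ) / √((1 - α) * τ) * √(∑ i, (x i * s i - τ) ^ 2) :=
        sqrt_sum_sq_le_mul_of_abs_le (by positivity) hweight
    _ ≤ (1 + δ) / √((1 - α) * τ) * (α * τ) := by gcongr
    _ = (1 + δ) * α * (√(1 - α))⁻¹ * √τ := by
        rw [Real.sqrt_mul h1α.le]
        field_simp
        rw [Real.sq_sqrt hτ.le]

/-- bound on `‖r‖` where `r = (x̃ ⊙ s̃)^{−1/2} ⊙ (τe − x ⊙ s)`. -/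
theorem residual_norm_bound (N : ℕ) (hN : 0 < N)
    (α δ τ : ℝ) (hα : α ∈ Set.Ioo (0:ℝ) 1) (hδ : 0 ≤ δ) (hτ : 0 < τ)
    (x s xt st : Fin N → ℝ)
    (hx : ∀ i, 0 < x i) (hs : ∀ i, 0 < s i)
    (hxt : ∀ i, 0 < xt i) (hst : ∀ i, 0 < st i)
    (hcen : Real.sqrt (∑ i, (x i * s i - τ) ^ 2) ≤ α * τ)
    (hratx : ∀ i, xt i / x i ∈ Set.Icc (1 / (1 + δ)) (1 + δ))
    (hrats : ∀ i, st i / s i ∈ Set.Icc (1 / (1 + δ)) (1 + δ))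
    (r : Fin N → ℝ)
    (hr : r = fun i => (Real.sqrt (xt i * st i))⁻¹ * (τ - x i * s i)) :
    Real.sqrt (∑ i, r i ^ 2) ≤ (1 + δ) * α * (Real.sqrt (1 - α))⁻¹ * Real.sqrt τ :=
  residual_norm_bound_general N α δ τ hα hδ hτ x s xt st hx hs hcen hratx hrats r hr
end

section
/- Let n ∈ ℕ₊, let H̃ ∈ ℝ^{n×n} be symmetric positive semidefinite, λ ≥ 0, Ω = [I, −I] ∈ ℝ^{n×2n}, τ > 0, and let x, s, x̃, s̃ ∈ ℝ^{2n} have all components positive. Suppose Δz ∈ ℝ^n and Δx, Δs ∈ ℝ^{2n} satisfy the approximated Newton system: 2λH̃Δz + ΩΔx = 0, ΩᵀΔz + Δs = 0, and s̃ ⊙ Δx + x̃ ⊙ Δs = τe − x ⊙ s. Define r = (x̃ ⊙ s̃)^{−1/2} ⊙ (τe − x ⊙ s), p_r = (s̃/x̃)^{1/2} ⊙ Δx, and q_r = (x̃/s̃)^{1/2} ⊙ Δs. Then ‖p_r‖ ≤ ‖r‖, ‖q_r‖ ≤ ‖r‖, ‖Δx ⊙ Δs‖ ≤ ‖r‖²/2,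 and ‖p_r‖ + ‖q_r‖ ≤ √2·‖r‖. -/
open Matrix

/-- Euclidean norm of a finitely-indexed real vector. -/
noncomputable def enorm2 {ι : Type*} [Fintype ι] (v : ι → ℝ) : ℝ :=
  Real.sqrt (∑ i, v i ^ 2)

/-!
The scaled steps `p_r`, `q_r` add up to `r` (this is the third Newton equation divided by
`√(x̃ ⊙ s̃)`) and their componentwise product is `Δx ⊙ Δs`. The first two Newton equations give
`⟨p_r, q_r⟩ = Δxᵀ Δs = 2λ Δzᵀ H̃ Δz ≥ 0`, hence `‖p_r‖² + ‖q_r‖² ≤ ‖r‖²`. All four bounds follow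
from this: the last one via `(a + b)² ≤ 2 (a² + b²)`, the one on `Δx ⊙ Δs` via
`‖p ⊙ q‖ ≤ ‖p ⊙ q‖₁ ≤ (‖p‖² + ‖q‖²) / 2`.
-/

open Finset

section enorm2

variable {ι : Type*} [Fintype ι]

theorem enorm2_nonneg (v : ι → ℝ) : 0 ≤ enorm2 v := Real.sqrt_nonneg _

theorem sq_enorm2 (v : ι → ℝ) : enorm2 v ^ 2 = ∑ i, v i ^ 2 :=
  Real.sq_sqrt (sum_nonneg fun i _ => sq_nonneg (v i))

theorem sq_enorm2_add (p q : ι → ℝ) :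
    enorm2 (p + q) ^ 2 = enorm2 p ^ 2 + enorm2 q ^ 2 + 2 * (p ⬝ᵥ q) := by
  simp only [sq_enorm2, dotProduct, Pi.add_apply, mul_sum, ← sum_add_distrib]
  exact sum_congr rfl fun i _ => by ring

theorem enorm2_le_of_sq_le {v : ι → ℝ} {a : ℝ} (ha : 0 ≤ a) (h : enorm2 v ^ 2 ≤ a ^ 2) :
    enorm2 v ≤ a :=
  (pow_le_pow_iff_left₀ (enorm2_nonneg v) ha two_ne_zero).1 h

theorem enorm2_mul_le (p q : ι → ℝ) : enorm2 (p * q) ≤ (enorm2 p ^ 2 + enorm2 q ^ 2) / 2 := by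
  have hpq : ∀ i, |p i * q i| ≤ (p i ^ 2 + q i ^ 2) / 2 := fun i => by
    rw [abs_mul]; nlinarith [sq_nonneg (|p i| - |q i|), sq_abs (p i), sq_abs (q i)]
  calc enorm2 (p * q) ≤ ∑ i, |p i * q i| := by
        rw [enorm2, Real.sqrt_le_left (sum_nonneg fun i _ => abs_nonneg _)]
        simpa only [Pi.mul_apply, sq_abs] using
          sum_sq_le_sq_sum_of_nonneg (s := univ) fun i _ => abs_nonneg (p i * q i)
    _ ≤ ∑ i, (p i ^ 2 + q i ^ 2) / 2 := sum_le_sum fun i _ => hpq i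
    _ = (enorm2 p ^ 2 + enorm2 q ^ 2) / 2 := by
        rw [sq_enorm2, sq_enorm2, ← sum_add_distrib, sum_div]

theorem sq_enorm2_add_sq_le_of_dotProduct_nonneg {p q : ι → ℝ} (hpq : 0 ≤ p ⬝ᵥ q) :
    enorm2 p ^ 2 + enorm2 q ^ 2 ≤ enorm2 (p + q) ^ 2 := by
  rw [sq_enorm2_add]; linarith

theorem enorm2_left_le_of_dotProduct_nonneg {p q : ι → ℝ} (hpq : 0 ≤ p ⬝ᵥ q) :
    enorm2 p ≤ enorm2 (p + q) :=
  enorm2_le_of_sq_le (enorm2_nonneg _) <| by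
    nlinarith [sq_enorm2_add_sq_le_of_dotProduct_nonneg hpq, sq_nonneg (enorm2 q)]

theorem enorm2_right_le_of_dotProduct_nonneg {p q : ι → ℝ} (hpq : 0 ≤ p ⬝ᵥ q) :
    enorm2 q ≤ enorm2 (p + q) := by
  rw [add_comm]; exact enorm2_left_le_of_dotProduct_nonneg (dotProduct_comm p q ▸ hpq)

theorem enorm2_mul_le_of_dotProduct_nonneg {p q : ι → ℝ} (hpq : 0 ≤ p ⬝ᵥ q) :
    enorm2 (p * q) ≤ enorm2 (p + q) ^ 2 / 2 :=
  (enorm2_mul_le p q).trans <| by linarith [sq_enorm2_add_sq_le_of_dotProduct_nonneg hpq]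

theorem enorm2_add_enorm2_le_of_dotProduct_nonneg {p q : ι → ℝ} (hpq : 0 ≤ p ⬝ᵥ q) :
    enorm2 p + enorm2 q ≤ Real.sqrt 2 * enorm2 (p + q) := by
  refine (pow_le_pow_iff_left₀ (by positivity [enorm2_nonneg p, enorm2_nonneg q])
    (mul_nonneg (Real.sqrt_nonneg 2) (enorm2_nonneg _)) two_ne_zero).1 ?_
  rw [mul_pow, Real.sq_sqrt zero_le_two]
  nlinarith [sq_enorm2_add_sq_le_of_dotProduct_nonneg hpq, sq_nonneg (enorm2 p - enorm2 q)]

end enorm2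

/-- `Δxᵀ Δs = c Δzᵀ H Δz`. -/
theorem dotProduct_nonneg_of_newton_system {m ι : Type*} [Fintype m] [Fintype ι]
    {H : Matrix m m ℝ} (hH : H.PosSemidef) {c : ℝ} (hc : 0 ≤ c) {Ω : Matrix m ι ℝ}
    {Δz : m → ℝ} {Δx Δs : ι → ℝ} (h₁ : c • H *ᵥ Δz + Ω *ᵥ Δx = 0) (h₂ : Ωᵀ *ᵥ Δz + Δs = 0) :
    0 ≤ Δx ⬝ᵥ Δs := by
  rw [eq_neg_of_add_eq_zero_right h₂, dotProduct_neg, dotProduct_mulVec, vecMul_transpose,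
    eq_neg_of_add_eq_zero_right h₁, neg_dotProduct, neg_neg, smul_dotProduct, smul_eq_mul,
    dotProduct_comm]
  exact mul_nonneg hc (hH.dotProduct_mulVec_nonneg Δz)

section scaling

variable {a b : ℝ}

theorem sqrt_div_mul_sqrt_div (ha : 0 < a) (hb : 0 < b) :
    Real.sqrt (b / a) * Real.sqrt (a / b) = 1 := by
  rw [← Real.sqrt_mul (by positivity), div_mul_div_comm, mul_comm b a, div_self (by positivity),
    Real.sqrt_one]

theorem sqrt_div_eq_inv_sqrt_mul_mul (ha : 0 < a) (hb : 0 < b) :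
    Real.sqrt (b / a) = (Real.sqrt (a * b))⁻¹ * b := by
  rw [Real.sqrt_div' _ ha.le, Real.sqrt_mul ha.le]
  nth_rewrite 3 [← Real.mul_self_sqrt hb.le]
  have := Real.sqrt_pos.2 ha
  have := Real.sqrt_pos.2 hb
  field_simp

theorem sqrt_div_mul_add_sqrt_div_mul (ha : 0 < a) (hb : 0 < b) (u v : ℝ) :
    Real.sqrt (b / a) * u + Real.sqrt (a / b) * v = (Real.sqrt (a * b))⁻¹ * (b * u + a * v) := by
  rw [sqrt_div_eq_inv_sqrt_mul_mul ha hb, sqrt_div_eq_inv_sqrt_mul_mul hb ha, mul_comm b a]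
  ring

theorem sqrt_div_mul_mul_sqrt_div_mul (ha : 0 < a) (hb : 0 < b) (u v : ℝ) :
    Real.sqrt (b / a) * u * (Real.sqrt (a / b) * v) = u * v := by
  linear_combination u * v * sqrt_div_mul_sqrt_div ha hb

end scaling

theorem approx_newton_pq_bounds_general (n : ℕ)
    (Ht : Matrix (Fin n) (Fin n) ℝ) (hHt : Ht.PosSemidef)
    (lam : ℝ) (hlam : 0 ≤ lam)
    (Ω : Matrix (Fin n) (Fin n ⊕ Fin n) ℝ)
    (τ : ℝ)
    (x s xt st : Fin n ⊕ Fin n → ℝ)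
    (hxt : ∀ i, 0 < xt i) (hst : ∀ i, 0 < st i)
    (Δz : Fin n → ℝ) (Δx Δs : Fin n ⊕ Fin n → ℝ)
    (heq1 : (2 * lam) • Ht.mulVec Δz + Ω.mulVec Δx = 0)
    (heq2 : Ωᵀ.mulVec Δz + Δs = 0)
    (heq3 : (fun i => st i * Δx i + xt i * Δs i) = fun i => τ - x i * s i)
    (r pr qr : Fin n ⊕ Fin n → ℝ)
    (hr : r = fun i => (Real.sqrt (xt i * st i))⁻¹ * (τ - x i * s i))
    (hpr : pr = fun i => Real.sqrt (st i / xt i) * Δx i)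
    (hqr : qr = fun i => Real.sqrt (xt i / st i) * Δs i) :
    enorm2 pr ≤ enorm2 r ∧ enorm2 qr ≤ enorm2 r ∧
    enorm2 (fun i => Δx i * Δs i) ≤ (enorm2 r) ^ 2 / 2 ∧
    enorm2 pr + enorm2 qr ≤ Real.sqrt 2 * enorm2 r := by
  have hsum : pr + qr = r := funext fun i => by
    rw [hpr, hqr, hr, Pi.add_apply, sqrt_div_mul_add_sqrt_div_mul (hxt i) (hst i)]
    exact congrArg _ (congrFun heq3 i)
  have hprod : pr * qr = Δx * Δs := funext fun i => by
    rw [hpr, hqr, Pi.mul_apply, sqrt_div_mul_mul_sqrt_div_mul (hxt i) (hst i), Pi.mul_apply]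
  have hacute : 0 ≤ pr ⬝ᵥ qr := by
    change 0 ≤ ∑ i, (pr * qr) i
    rw [hprod]
    exact dotProduct_nonneg_of_newton_system hHt (by positivity) heq1 heq2
  have hmul := enorm2_mul_le_of_dotProduct_nonneg hacute
  rw [hprod] at hmul
  rw [← hsum]
  exact ⟨enorm2_left_le_of_dotProduct_nonneg hacute, enorm2_right_le_of_dotProduct_nonneg hacute,
    hmul, enorm2_add_enorm2_le_of_dotProduct_nonneg hacute⟩

/-- bounds `‖p_r‖ ≤ ‖r‖`, `‖q_r‖ ≤ ‖r‖`, `‖Δx ⊙ Δs‖ ≤ ‖r‖²/2`, and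
`‖p_r‖ + ‖q_r‖ ≤ √2‖r‖` for the approximated Newton step. -/
theorem approx_newton_pq_bounds (n : ℕ) (hn : 0 < n)
    (Ht : Matrix (Fin n) (Fin n) ℝ) (hHt : Ht.PosSemidef)
    (lam : ℝ) (hlam : 0 ≤ lam)
    (Ω : Matrix (Fin n) (Fin n ⊕ Fin n) ℝ)
    (hΩ : Ω = Matrix.fromCols (1 : Matrix (Fin n) (Fin n) ℝ) (-1))
    (τ : ℝ) (hτ : 0 < τ)
    (x s xt st : Fin n ⊕ Fin n → ℝ)
    (hx : ∀ i, 0 < x i) (hs : ∀ i, 0 < s i)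
    (hxt : ∀ i, 0 < xt i) (hst : ∀ i, 0 < st i)
    (Δz : Fin n → ℝ) (Δx Δs : Fin n ⊕ Fin n → ℝ)
    (heq1 : (2 * lam) • Ht.mulVec Δz + Ω.mulVec Δx = 0)
    (heq2 : Ωᵀ.mulVec Δz + Δs = 0)
    (heq3 : (fun i => st i * Δx i + xt i * Δs i) = fun i => τ - x i * s i)
    (r pr qr : Fin n ⊕ Fin n → ℝ)
    (hr : r = fun i => (Real.sqrt (xt i * st i))⁻¹ * (τ - x i * s i))
    (hpr : pr = fun i => Real.sqrt (st i / xt i) * Δx i)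
    (hqr : qr = fun i => Real.sqrt (xt i / st i) * Δs i) :
    enorm2 pr ≤ enorm2 r ∧ enorm2 qr ≤ enorm2 r ∧
    enorm2 (fun i => Δx i * Δs i) ≤ (enorm2 r) ^ 2 / 2 ∧
    enorm2 pr + enorm2 qr ≤ Real.sqrt 2 * enorm2 r :=
  approx_newton_pq_bounds_general n Ht hHt lam hlam Ω τ x s xt st hxt hst Δz Δx Δs heq1 heq2 heq3 r
    pr qr hr hpr hqr
end

section
/- Let n ∈ ℕ₊, α ∈ (0,1), δ ≥ 0, let H̃ ∈ ℝ^{n×n} be symmetric positive semidefinite, λ ≥ 0, Ω = [I, −I] ∈ ℝ^{n×2n}, τ > 0, and let x, s, x̃, s̃ ∈ ℝ^{2n} have all components positive. Assume ‖x ⊙ s − τe‖ ≤ ατ, assume x̃ᵢ/xᵢ ∈ [1/(1+δ), 1+δ] and s̃ᵢ/sᵢ ∈ [1/(1+δ), 1+δ] for every i, and suppose Δz ∈ ℝ^n and Δx, Δs ∈ ℝ^{2n} satisfy the approximated Newton system: 2λH̃Δz + ΩΔx = 0, ΩᵀΔz + Δs = 0, and s̃ ⊙ Δx + x̃ ⊙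 Δs = τe − x ⊙ s. Set x⁺ = x + Δx and s⁺ = s + Δs. Then ‖x⁺ ⊙ s⁺ − τe‖ ≤ στ, where σ = √2·δ·(1+δ)²·α·√((1+α)/(1−α)) + (1+δ)²·α²/(2(1−α)). -/
/-!
Put `a = s̃ ⊙ Δx`, `b = x̃ ⊙ Δs` and `m = x̃ ⊙ s̃`. Then `a + b = τe − x ⊙ s`, `Δx ⊙ Δs = a ⊙ b / m`
and `x⁺ ⊙ s⁺ − τe = (s − s̃) ⊙ Δx + (x − x̃) ⊙ Δs + a ⊙ b / m`. The first two Newton equations give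
`Δxᵀ Δs = 2λ Δzᵀ H̃ Δz ≥ 0`, so the weighted products `aᵢ bᵢ / mᵢ` have nonnegative sum. Hence
`∑ |aᵢ bᵢ / mᵢ| ≤ K / 2` and `∑ (aᵢ² + bᵢ²) / mᵢ ≤ K` for `K = ∑ (aᵢ + bᵢ)² / mᵢ`, and
`K ≤ (1+δ)² α² τ / (1 − α)` since centrality and closeness give `mᵢ ≥ (1 − α) τ / (1+δ)²`.
The first-order term is at most `δ (|aᵢ| + |bᵢ|)` componentwise, and `mᵢ ≤ (1+δ)² (1 + α) τ`
turns its norm into the first summand of `σ τ`; the second one is `K / 2`.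
-/

open Matrix

/-- Euclidean norm of a finitely-indexed real vector. -/
noncomputable def euclEnorm {ι : Type*} [Fintype ι] (v : ι → ℝ) : ℝ :=
  Real.sqrt (∑ i, v i ^ 2)

section EuclNorm

variable {ι : Type*} [Fintype ι]

lemma euclEnorm_eq_norm (v : ι → ℝ) : euclEnorm v = ‖WithLp.toLp 2 v‖ := by
  simp [euclEnorm, EuclideanSpace.norm_eq]

lemma euclEnorm_add_le (u v : ι → ℝ) : euclEnorm (u + v) ≤ euclEnorm u + euclEnorm v := by
  simpa only [euclEnorm_eq_norm, WithLp.toLp_add] using norm_add_le _ _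

lemma euclEnorm_le_iff {v : ι → ℝ} {t : ℝ} (ht : 0 ≤ t) :
    euclEnorm v ≤ t ↔ ∑ i, v i ^ 2 ≤ t ^ 2 :=
  Real.sqrt_le_left ht

lemma abs_le_euclEnorm (v : ι → ℝ) (i : ι) : |v i| ≤ euclEnorm v :=
  Real.abs_le_sqrt <| Finset.single_le_sum (fun j _ => sq_nonneg (v j)) (Finset.mem_univ i)

lemma euclEnorm_le_sum_abs (v : ι → ℝ) : euclEnorm v ≤ ∑ i, |v i| := by
  rw [euclEnorm_le_iff (Finset.sum_nonneg fun i _ => abs_nonneg _)]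
  simpa only [sq_abs] using Finset.sum_sq_le_sq_sum_of_nonneg (fun i _ => abs_nonneg (v i))

end EuclNorm

lemma dotProduct_nonneg_of_newton {m n : Type*} [Fintype m] [Fintype n]
    {H : Matrix n n ℝ} (hH : H.PosSemidef) {lam : ℝ} (hlam : 0 ≤ lam) {Ω : Matrix n m ℝ}
    {Δz : n → ℝ} {Δx Δs : m → ℝ}
    (h₁ : (2 * lam) • H *ᵥ Δz + Ω *ᵥ Δx = 0) (h₂ : Ωᵀ *ᵥ Δz + Δs = 0) :
    0 ≤ Δx ⬝ᵥ Δs := by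
  have hΔs : Δs = -(Ωᵀ *ᵥ Δz) := eq_neg_of_add_eq_zero_right h₂
  have hΩx : Ω *ᵥ Δx = -((2 * lam) • H *ᵥ Δz) := eq_neg_of_add_eq_zero_right h₁
  have hq : 0 ≤ Δz ⬝ᵥ H *ᵥ Δz := by simpa using hH.dotProduct_mulVec_nonneg Δz
  rw [hΔs, dotProduct_neg, dotProduct_mulVec, vecMul_transpose, hΩx, neg_dotProduct, neg_neg,
    smul_dotProduct, smul_eq_mul, dotProduct_comm]
  positivity

section Weighted

variable {ι : Type*} [Fintype ι] {a b m : ι → ℝ}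

lemma sum_abs_mul_div_le (hm : ∀ i, 0 < m i) (hab : 0 ≤ ∑ i, a i * b i / m i) :
    ∑ i, |a i * b i / m i| ≤ (∑ i, (a i + b i) ^ 2 / m i) / 2 := by
  -- `|t| + t = 2 max t 0` and `4ab ≤ (a + b)²`
  have key : ∀ i, |a i * b i / m i| + a i * b i / m i ≤ (a i + b i) ^ 2 / m i / 2 := by
    intro i
    have h : |a i * b i| + a i * b i ≤ (a i + b i) ^ 2 / 2 := by
      cases abs_cases (a i * b i) <;> nlinarith [sq_nonneg (a i - b i), sq_nonneg (a i + b i)]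
    calc |a i * b i / m i| + a i * b i / m i = (|a i * b i| + a i * b i) / m i := by
          rw [abs_div, abs_of_pos (hm i), add_div]
      _ ≤ (a i + b i) ^ 2 / 2 / m i := div_le_div_of_nonneg_right h (hm i).le
      _ = (a i + b i) ^ 2 / m i / 2 := div_right_comm _ _ _
  have := Finset.sum_le_sum fun i (_ : i ∈ Finset.univ) => key i
  rw [Finset.sum_add_distrib, ← Finset.sum_div] at this
  linarith

lemma sum_sq_add_sq_div_le (hab : 0 ≤ ∑ i, a i * b i / m i) :
    ∑ i, (a i ^ 2 + b i ^ 2) / m i ≤ ∑ i, (a i + b i) ^ 2 / m i := by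
  have h : ∀ i, (a i + b i) ^ 2 / m i = (a i ^ 2 + b i ^ 2) / m i + 2 * (a i * b i / m i) := by
    intro i; ring
  simp only [h, Finset.sum_add_distrib, ← Finset.mul_sum]
  linarith

lemma sum_sq_div_le_of_euclEnorm_le {w : ι → ℝ} {r c : ℝ} (hw : euclEnorm w ≤ r) (hc : 0 < c)
    (hm : ∀ i, c ≤ m i) : ∑ i, w i ^ 2 / m i ≤ r ^ 2 / c :=
  calc ∑ i, w i ^ 2 / m i ≤ ∑ i, w i ^ 2 / c :=
        Finset.sum_le_sum fun i _ => div_le_div_of_nonneg_left (sq_nonneg _) hc (hm i)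
    _ = (∑ i, w i ^ 2) / c := (Finset.sum_div _ _ _).symm
    _ ≤ r ^ 2 / c := by
        gcongr
        exact (euclEnorm_le_iff ((Real.sqrt_nonneg _).trans hw)).mp hw

lemma sum_sq_le_of_abs_le {p : ι → ℝ} {δ M : ℝ} (hm : ∀ i, 0 < m i) (hM : ∀ i, m i ≤ M)
    (hM₀ : 0 ≤ M) (hab : 0 ≤ ∑ i, a i * b i / m i) (hp : ∀ i, |p i| ≤ δ * (|a i| + |b i|)) :
    ∑ i, p i ^ 2 ≤ 2 * δ ^ 2 * M * ∑ i, (a i + b i) ^ 2 / m i := by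
  have hp_sq : ∀ i, p i ^ 2 ≤ 2 * δ ^ 2 * (a i ^ 2 + b i ^ 2) := by
    intro i
    have h := pow_le_pow_left₀ (abs_nonneg _) (hp i) 2
    rw [sq_abs] at h
    nlinarith [sq_abs (a i), sq_abs (b i), sq_nonneg (|a i| - |b i|), sq_nonneg δ]
  have hweight : ∀ i, a i ^ 2 + b i ^ 2 ≤ M * ((a i ^ 2 + b i ^ 2) / m i) := by
    intro i
    rw [mul_div_assoc', le_div_iff₀ (hm i), mul_comm M]
    exact mul_le_mul_of_nonneg_left (hM i) (by positivity)
  calc ∑ i, p i ^ 2 ≤ ∑ i, 2 * δ ^ 2 * M * ((a i ^ 2 + b i ^ 2) / m i) :=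
        Finset.sum_le_sum fun i _ => (hp_sq i).trans <|
          (mul_le_mul_of_nonneg_left (hweight i) (by positivity)).trans_eq (by ring)
    _ = 2 * δ ^ 2 * M * ∑ i, (a i ^ 2 + b i ^ 2) / m i := by rw [Finset.mul_sum]
    _ ≤ 2 * δ ^ 2 * M * ∑ i, (a i + b i) ^ 2 / m i :=
        mul_le_mul_of_nonneg_left (sum_sq_add_sq_div_le hab) (by positivity)

lemma euclEnorm_add_mul_div_le {p : ι → ℝ} {δ M K : ℝ} (hm : ∀ i, 0 < m i)
    (hM : ∀ i, m i ≤ M) (hM₀ : 0 ≤ M) (hab : 0 ≤ ∑ i, a i * b i / m i)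
    (hp : ∀ i, |p i| ≤ δ * (|a i| + |b i|)) (hK : ∑ i, (a i + b i) ^ 2 / m i ≤ K) :
    euclEnorm (p + fun i => a i * b i / m i) ≤ √(2 * δ ^ 2 * M * K) + K / 2 := by
  have hK₀ : 0 ≤ K :=
    (Finset.sum_nonneg fun i _ => div_nonneg (sq_nonneg _) (hm i).le).trans hK
  refine (euclEnorm_add_le _ _).trans (add_le_add ?_ ?_)
  · refine (euclEnorm_le_iff (Real.sqrt_nonneg _)).mpr ?_
    rw [Real.sq_sqrt (by positivity)]
    exact (sum_sq_le_of_abs_le hm hM hM₀ hab hp).trans (by gcongr)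
  · calc euclEnorm (fun i => a i * b i / m i) ≤ ∑ i, |a i * b i / m i| := euclEnorm_le_sum_abs _
      _ ≤ (∑ i, (a i + b i) ^ 2 / m i) / 2 := sum_abs_mul_div_le hm hab
      _ ≤ K / 2 := by gcongr

end Weighted

section Scalar

variable {x y δ : ℝ}

lemma le_one_add_mul_of_div_mem_Icc (hx : 0 < x) (h : y / x ∈ Set.Icc (1 / (1 + δ)) (1 + δ))
    (hδ : 0 ≤ δ) : x ≤ (1 + δ) * y ∧ y ≤ (1 + δ) * x := by
  obtain ⟨h₁, h₂⟩ := h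
  rw [div_le_div_iff₀ (by positivity) hx] at h₁
  rw [div_le_iff₀ hx] at h₂
  constructor <;> linarith

lemma abs_sub_le_of_le_one_add_mul (hδ : 0 ≤ δ) (h₁ : x ≤ (1 + δ) * y)
    (h₂ : y ≤ (1 + δ) * x) : |x - y| ≤ δ * y :=
  abs_le.mpr ⟨by nlinarith, by linarith⟩

lemma mul_le_sq_mul_mul {s t c : ℝ} (hx : 0 ≤ x) (hs : 0 ≤ s) (h₁ : x ≤ c * y) (h₂ : s ≤ c * t) :
    x * s ≤ c ^ 2 * (y * t) :=
  (mul_le_mul h₁ h₂ hs (hx.trans h₁)).trans_eq (by ring)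

lemma abs_mul_add_mul_le {u v c d z : ℝ} (hu : |u| ≤ δ * c) (hv : |v| ≤ δ * d)
    (hc : 0 ≤ c) (hd : 0 ≤ d) : |u * y + v * z| ≤ δ * (|c * y| + |d * z|) := by
  rw [abs_mul c, abs_mul d, abs_of_nonneg hc, abs_of_nonneg hd]
  calc |u * y + v * z| ≤ |u| * |y| + |v| * |z| :=
        (abs_add_le _ _).trans_eq (by rw [abs_mul, abs_mul])
    _ ≤ δ * c * |y| + δ * d * |z| := by gcongr
    _ = δ * (c * |y| + d * |z|) := by ring


lemma mul_mem_Icc_of_le_one_add_mul {s x' s' α τ : ℝ} (hx : 0 < x) (hs : 0 < s) (hx' : 0 < x')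
    (hs' : 0 < s') (hδ : 0 ≤ δ) (hX : x ≤ (1 + δ) * x' ∧ x' ≤ (1 + δ) * x)
    (hS : s ≤ (1 + δ) * s' ∧ s' ≤ (1 + δ) * s) (hxs : |x * s - τ| ≤ α * τ) :
    x' * s' ∈ Set.Icc ((1 - α) * τ / (1 + δ) ^ 2) ((1 + δ) ^ 2 * ((1 + α) * τ)) := by
  obtain ⟨hlo, hhi⟩ := abs_le.mp hxs
  constructor
  · rw [div_le_iff₀ (by positivity)]
    linarith [mul_le_sq_mul_mul hx.le hs.le hX.1 hS.1]
  · nlinarith [mul_le_sq_mul_mul hx'.le hs'.le hX.2 hS.2]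

lemma newton_step_mul_sub_eq {s x' s' τ Δx Δs : ℝ} (hx' : x' ≠ 0) (hs' : s' ≠ 0)
    (h : s' * Δx + x' * Δs = τ - x * s) :
    (x + Δx) * (s + Δs) - τ
      = ((s - s') * Δx + (x - x') * Δs) + s' * Δx * (x' * Δs) / (x' * s') := by
  rw [show s' * Δx * (x' * Δs) / (x' * s') = Δx * Δs by field_simp]
  linear_combination h

end Scalar

lemma newton_centrality_bound_eq {α δ τ : ℝ} (hα₀ : 0 ≤ α) (hα₁ : α < 1) (hδ : 0 ≤ δ)
    (hτ : 0 ≤ τ) :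
    √(2 * δ ^ 2 * ((1 + δ) ^ 2 * ((1 + α) * τ)) * ((1 + δ) ^ 2 * α ^ 2 * τ / (1 - α)))
        + (1 + δ) ^ 2 * α ^ 2 * τ / (1 - α) / 2
      = (√2 * δ * (1 + δ) ^ 2 * α * √((1 + α) / (1 - α))
        + (1 + δ) ^ 2 * α ^ 2 / (2 * (1 - α))) * τ := by
  have h1α : 0 < 1 - α := sub_pos.mpr hα₁
  have hsq : 2 * δ ^ 2 * ((1 + δ) ^ 2 * ((1 + α) * τ)) * ((1 + δ) ^ 2 * α ^ 2 * τ / (1 - α))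
      = (√2 * δ * (1 + δ) ^ 2 * α * √((1 + α) / (1 - α)) * τ) ^ 2 := by
    rw [show (√2 * δ * (1 + δ) ^ 2 * α * √((1 + α) / (1 - α)) * τ) ^ 2
        = √2 ^ 2 * √((1 + α) / (1 - α)) ^ 2 * (δ * (1 + δ) ^ 2 * α * τ) ^ 2 by ring,
      Real.sq_sqrt zero_le_two, Real.sq_sqrt (div_nonneg (by linarith) h1α.le)]
    field_simp
  rw [hsq, Real.sqrt_sq (by positivity)]
  field_simp

theorem approx_newton_next_centrality_general (n : ℕ)
    (α δ : ℝ) (hα : α ∈ Set.Ioo (0:ℝ) 1) (hδ : 0 ≤ δ)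
    (Ht : Matrix (Fin n) (Fin n) ℝ) (hHt : Ht.PosSemidef)
    (lam : ℝ) (hlam : 0 ≤ lam)
    (Ω : Matrix (Fin n) (Fin n ⊕ Fin n) ℝ)
    (τ : ℝ) (hτ : 0 < τ)
    (x s xt st : Fin n ⊕ Fin n → ℝ)
    (hx : ∀ i, 0 < x i) (hs : ∀ i, 0 < s i)
    (hxt : ∀ i, 0 < xt i) (hst : ∀ i, 0 < st i)
    (hcen : euclEnorm (fun i => x i * s i - τ) ≤ α * τ)
    (hratx : ∀ i, xt i / x i ∈ Set.Icc (1 / (1 + δ)) (1 + δ))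
    (hrats : ∀ i, st i / s i ∈ Set.Icc (1 / (1 + δ)) (1 + δ))
    (Δz : Fin n → ℝ) (Δx Δs : Fin n ⊕ Fin n → ℝ)
    (heq1 : (2 * lam) • Ht.mulVec Δz + Ω.mulVec Δx = 0)
    (heq2 : Ωᵀ.mulVec Δz + Δs = 0)
    (heq3 : (fun i => st i * Δx i + xt i * Δs i) = fun i => τ - x i * s i)
    (xp sp : Fin n ⊕ Fin n → ℝ)
    (hxp : xp = x + Δx) (hsp : sp = s + Δs)
    (σ : ℝ)
    (hσ : σ = Real.sqrt 2 * δ * (1 + δ) ^ 2 * α * Real.sqrt ((1 + α) / (1 - α))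
      + (1 + δ) ^ 2 * α ^ 2 / (2 * (1 - α))) :
    euclEnorm (fun i => xp i * sp i - τ) ≤ σ * τ := by
  obtain ⟨hα₀, hα₁⟩ := hα
  subst hxp hsp
  have h1α : 0 < 1 - α := sub_pos.mpr hα₁
  have hX i := le_one_add_mul_of_div_mem_Icc (hx i) (hratx i) hδ
  have hS i := le_one_add_mul_of_div_mem_Icc (hs i) (hrats i) hδ
  have hm i := mul_mem_Icc_of_le_one_add_mul (hx i) (hs i) (hxt i) (hst i) hδ (hX i) (hS i)
    ((abs_le_euclEnorm _ i).trans hcen)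
  have hab i : st i * Δx i + xt i * Δs i = τ - x i * s i := congrFun heq3 i
  have hdot : 0 ≤ ∑ i, st i * Δx i * (xt i * Δs i) / (xt i * st i) := by
    refine (dotProduct_nonneg_of_newton hHt hlam heq1 heq2).trans_eq
      (Finset.sum_congr rfl fun i _ => ?_)
    field_simp [(hxt i).ne', (hst i).ne']
  have hK : ∑ i, (st i * Δx i + xt i * Δs i) ^ 2 / (xt i * st i)
      ≤ (1 + δ) ^ 2 * α ^ 2 * τ / (1 - α) :=
    calc _ = ∑ i, (x i * s i - τ) ^ 2 / (xt i * st i) :=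
          Finset.sum_congr rfl fun i _ => by rw [hab i, ← neg_sub, neg_sq]
      _ ≤ (α * τ) ^ 2 / ((1 - α) * τ / (1 + δ) ^ 2) :=
          sum_sq_div_le_of_euclEnorm_le hcen (by positivity) fun i => (hm i).1
      _ = (1 + δ) ^ 2 * α ^ 2 * τ / (1 - α) := by field_simp
  have hp i : |(s i - st i) * Δx i + (x i - xt i) * Δs i|
      ≤ δ * (|st i * Δx i| + |xt i * Δs i|) :=
    abs_mul_add_mul_le (abs_sub_le_of_le_one_add_mul hδ (hS i).1 (hS i).2)
      (abs_sub_le_of_le_one_add_mul hδ (hX i).1 (hX i).2) (hst i).le (hxt i).le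
  have hprod : (fun i => (x + Δx) i * (s + Δs) i - τ)
      = (fun i => (s i - st i) * Δx i + (x i - xt i) * Δs i)
        + fun i => st i * Δx i * (xt i * Δs i) / (xt i * st i) :=
    funext fun i => newton_step_mul_sub_eq (hxt i).ne' (hst i).ne' (hab i)
  rw [hprod, hσ, ← newton_centrality_bound_eq hα₀.le hα₁ hδ hτ.le]
  exact euclEnorm_add_mul_div_le (fun i => mul_pos (hxt i) (hst i)) (fun i => (hm i).2)
    (by positivity) hdot hp hK

/-- Lemma 6 of the paper: after the approximated Newton step,
`‖x⁺ ⊙ s⁺ − τe‖ ≤ στ` with `σ = √2δ(1+δ)²α√((1+α)/(1−α)) + (1+δ)²α²/(2(1−α))`. -/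
theorem approx_newton_next_centrality (n : ℕ) (hn : 0 < n)
    (α δ : ℝ) (hα : α ∈ Set.Ioo (0:ℝ) 1) (hδ : 0 ≤ δ)
    (Ht : Matrix (Fin n) (Fin n) ℝ) (hHt : Ht.PosSemidef)
    (lam : ℝ) (hlam : 0 ≤ lam)
    (Ω : Matrix (Fin n) (Fin n ⊕ Fin n) ℝ)
    (hΩ : Ω = Matrix.fromCols (1 : Matrix (Fin n) (Fin n) ℝ) (-1))
    (τ : ℝ) (hτ : 0 < τ)
    (x s xt st : Fin n ⊕ Fin n → ℝ)
    (hx : ∀ i, 0 < x i) (hs : ∀ i, 0 < s i)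
    (hxt : ∀ i, 0 < xt i) (hst : ∀ i, 0 < st i)
    (hcen : euclEnorm (fun i => x i * s i - τ) ≤ α * τ)
    (hratx : ∀ i, xt i / x i ∈ Set.Icc (1 / (1 + δ)) (1 + δ))
    (hrats : ∀ i, st i / s i ∈ Set.Icc (1 / (1 + δ)) (1 + δ))
    (Δz : Fin n → ℝ) (Δx Δs : Fin n ⊕ Fin n → ℝ)
    (heq1 : (2 * lam) • Ht.mulVec Δz + Ω.mulVec Δx = 0)
    (heq2 : Ωᵀ.mulVec Δz + Δs = 0)
    (heq3 : (fun i => st i * Δx i + xt i * Δs i) = fun i => τ - x i * s i)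
    (xp sp : Fin n ⊕ Fin n → ℝ)
    (hxp : xp = x + Δx) (hsp : sp = s + Δs)
    (σ : ℝ)
    (hσ : σ = Real.sqrt 2 * δ * (1 + δ) ^ 2 * α * Real.sqrt ((1 + α) / (1 - α))
      + (1 + δ) ^ 2 * α ^ 2 / (2 * (1 - α))) :
    euclEnorm (fun i => xp i * sp i - τ) ≤ σ * τ :=
  approx_newton_next_centrality_general n α δ hα hδ Ht hHt lam hlam Ω τ hτ x s xt st hx hs hxt hst
    hcen hratx hrats Δz Δx Δs heq1 heq2 heq3 xp sp hxp hsp σ hσ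
end

section
/- Let n ∈ ℕ₊, τ > 0, σ ≥ 0, α > σ, and β = (α−σ)/(1 + α/√(2n)); note β > 0 and β < √(2n). Let x⁺, s⁺ ∈ ℝ^{2n} satisfy ‖x⁺ ⊙ s⁺ − τe‖ ≤ στ, and set τ⁺ = (1 − β/√(2n))·τ. Then ‖x⁺ ⊙ s⁺ − τ⁺e‖/τ⁺ ≤ (σ + β)/(1 − β/√(2n)) = α. -/
/-- the recentering inequality
`‖x⁺ ⊙ s⁺ − τ⁺e‖/τ⁺ ≤ (σ + β)/(1 − β/√(2n)) = α` for `β = (α−σ)/(1 + α/√(2n))`. -/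
theorem recentering_bound (n : ℕ) (hn : 0 < n)
    (τ σ α β : ℝ) (hτ : 0 < τ) (hσ : 0 ≤ σ) (hσα : σ < α)
    (hβ : β = (α - σ) / (1 + α / Real.sqrt (2 * n)))
    (xp sp : Fin (2 * n) → ℝ)
    (hcen : Real.sqrt (∑ i, (xp i * sp i - τ) ^ 2) ≤ σ * τ)
    (τp : ℝ) (hτp : τp = (1 - β / Real.sqrt (2 * n)) * τ) :
    0 < β ∧ β < Real.sqrt (2 * n) ∧
    Real.sqrt (∑ i, (xp i * sp i - τp) ^ 2) / τp
      ≤ (σ + β) / (1 - β / Real.sqrt (2 * n)) ∧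
    (σ + β) / (1 - β / Real.sqrt (2 * n)) = α := by
  set r : ℝ := Real.sqrt (2 * n) with hrdef
  have h2n : (0:ℝ) < 2 * n := by positivity
  have hr : 0 < r := Real.sqrt_pos.mpr h2n
  have hr2 : r ^ 2 = 2 * n := Real.sq_sqrt h2n.le
  have hα : 0 < α := lt_of_le_of_lt hσ hσα
  have hden : (0:ℝ) < 1 + α / r := by positivity
  have hβpos : 0 < β := by
    rw [hβ]; exact div_pos (by linarith) hden
  have hβr : β < r := by
    rw [hβ, div_lt_iff₀ hden]
    have : r * (1 + α / r) = r + α := by field_simp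
    rw [this]; linarith
  have h1β : 0 < 1 - β / r := by
    have : β / r < 1 := (div_lt_one hr).mpr hβr
    linarith
  have hτp' : 0 < τp := by rw [hτp]; positivity
  -- equality part
  have heq : (σ + β) / (1 - β / r) = α := by
    have hβ' : β * (1 + α / r) = α - σ := by
      rw [hβ]; field_simp
    rw [div_eq_iff (ne_of_gt h1β)]
    field_simp at hβ' ⊢
    nlinarith [hβ']
  refine ⟨hβpos, hβr, ?_, heq⟩
  -- main inequality
  set c : ℝ := β / r * τ with hc
  have hc0 : 0 < c := by positivity
  set u : Fin (2 * n) → ℝ := fun i => xp i * sp i - τ with hu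
  set A : ℝ := Real.sqrt (∑ i, u i ^ 2) with hA
  have hA0 : 0 ≤ A := Real.sqrt_nonneg _
  have hA2 : A ^ 2 = ∑ i, u i ^ 2 := Real.sq_sqrt (by positivity)
  have hCS : ∑ i, u i ≤ A * r := by
    have h1 : (∑ i, u i * 1) ^ 2 ≤ (∑ i, u i ^ 2) * (∑ _i : Fin (2*n), (1:ℝ) ^ 2) :=
      Finset.sum_mul_sq_le_sq_mul_sq Finset.univ u (fun _ => (1:ℝ))
    simp only [mul_one, one_pow, Finset.sum_const, Finset.card_univ,
      Fintype.card_fin, nsmul_eq_mul] at h1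
    have h2 : (∑ i, u i) ^ 2 ≤ (A * r) ^ 2 := by
      rw [mul_pow, hA2, hr2]; simpa using h1
    calc ∑ i, u i ≤ |∑ i, u i| := le_abs_self _
      _ = Real.sqrt ((∑ i, u i) ^ 2) := (Real.sqrt_sq_eq_abs _).symm
      _ ≤ Real.sqrt ((A * r) ^ 2) := Real.sqrt_le_sqrt h2
      _ = A * r := by rw [Real.sqrt_sq (by positivity)]
  -- expand
  have hexp : ∑ i, (xp i * sp i - τp) ^ 2
      = (∑ i, u i ^ 2) + 2 * c * (∑ i, u i) + (2 * n) * c ^ 2 := by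
    have : ∀ i, (xp i * sp i - τp) ^ 2 = u i ^ 2 + 2 * c * u i + c ^ 2 := by
      intro i
      have : xp i * sp i - τp = u i + c := by
        simp only [hu, hτp, hc]; ring
      rw [this]; ring
    simp_rw [this, Finset.sum_add_distrib, ← Finset.mul_sum, Finset.sum_const,
      Finset.card_univ, Fintype.card_fin, nsmul_eq_mul]
    push_cast
    ring
  have hbound : Real.sqrt (∑ i, (xp i * sp i - τp) ^ 2) ≤ A + r * c := by
    have h3 : ∑ i, (xp i * sp i - τp) ^ 2 ≤ (A + r * c) ^ 2 := by
      rw [hexp]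
      have : (A + r * c) ^ 2 = A ^ 2 + 2 * c * (A * r) + (2 * n) * c ^ 2 := by
        rw [← hr2]; ring
      rw [this, hA2]
      nlinarith [hCS]
    calc Real.sqrt (∑ i, (xp i * sp i - τp) ^ 2) ≤ Real.sqrt ((A + r * c) ^ 2) :=
          Real.sqrt_le_sqrt h3
      _ = A + r * c := Real.sqrt_sq (by positivity)
  have hrc : r * c = β * τ := by
    rw [hc]; field_simp
  have htotal : Real.sqrt (∑ i, (xp i * sp i - τp) ^ 2) ≤ (σ + β) * τ := by
    calc Real.sqrt (∑ i, (xp i * sp i - τp) ^ 2) ≤ A + r * c := hbound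
      _ ≤ σ * τ + β * τ := by rw [hrc]; exact add_le_add hcen le_rfl
      _ = (σ + β) * τ := by ring
  rw [div_le_iff₀ hτp']
  calc Real.sqrt (∑ i, (xp i * sp i - τp) ^ 2) ≤ (σ + β) * τ := htotal
    _ = (σ + β) / (1 - β / r) * τp := by
        have hrβ : r - β ≠ 0 := by linarith
        rw [hτp]; field_simp
end

section
/- Let n ∈ ℕ₊, α ∈ (0, 1/2), set σ = α²/(2(1−α)) and β = (α−σ)/(1 + α/√(2n)) (note σ < α, so β > 0). Let H̃ ∈ ℝ^{n×n} be symmetric positive semidefinite, λ ≥ 0, Ω = [I, −I] ∈ ℝ^{n×2n}, τ > 0, and let x, s ∈ ℝ^{2n} have all components positive with ‖x ⊙ s − τe‖ ≤ ατ. Suppose Δz ∈ ℝ^n and Δx, Δs ∈ ℝ^{2n} satisfy the exact Newton system: 2λH̃Δz + ΩΔx = 0, ΩᵀΔz + Δs = 0, and s ⊙ Δx + x ⊙ Δs = τe − x ⊙ s. Then the next iterate x⁺ = x + Δx, s⁺ = s + Δs and τ⁺ = (1 − β/√(2n))·τ satisfy: every component of x⁺ and of s⁺ is nonnegative, and ‖x⁺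 ⊙ s⁺ − τ⁺e‖ ≤ α·τ⁺. -/
/-! The Newton system gives `Δx ⬝ Δs = 2λ Δzᵀ H̃ Δz ≥ 0`. In each coordinate,
`s Δx + x Δs = τ - x s` and AM–GM give `4 (x s)(Δx Δs) ≤ (τ - x s)²`; since `x s ≥ (1 - α)τ`
in the neighbourhood, the positive parts of `Δx ⊙ Δs` sum to at most `στ/2`, and because the
whole sum is nonnegative the negative parts sum to no more, so `‖Δx ⊙ Δs‖ ≤ στ`.
As `x⁺ ⊙ s⁺ = τe + Δx ⊙ Δs` and `σ < 1`, the products `x⁺ᵢ s⁺ᵢ` are positive, hence so are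
`x⁺ᵢ` and `s⁺ᵢ` because `s x⁺ + x s⁺ = x s + τ > 0`. Finally `τ - τ⁺ = βτ/√(2n)`, and the
triangle inequality gives `‖x⁺ ⊙ s⁺ - τ⁺e‖ ≤ (σ + β)τ = ατ⁺`. -/

open Matrix

/-- Euclidean norm of a finitely-indexed real vector. -/
noncomputable def enorm' {ι : Type*} [Fintype ι] (v : ι → ℝ) : ℝ :=
  Real.sqrt (∑ i, v i ^ 2)

open Finset

section EuclideanNorm

variable {ι : Type*} [Fintype ι]

lemma enorm'_eq_norm (v : ι → ℝ) : enorm' v = ‖(WithLp.toLp 2 v : EuclideanSpace ℝ ι)‖ := by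
  simp [enorm', EuclideanSpace.norm_eq]

lemma enorm'_le_iff {v : ι → ℝ} {c : ℝ} (hc : 0 ≤ c) : enorm' v ≤ c ↔ ∑ i, v i ^ 2 ≤ c ^ 2 :=
  Real.sqrt_le_left hc

lemma enorm'_nonneg (v : ι → ℝ) : 0 ≤ enorm' v := Real.sqrt_nonneg _

lemma abs_le_enorm' (v : ι → ℝ) (i : ι) : |v i| ≤ enorm' v :=
  Real.abs_le_sqrt (single_le_sum (fun j _ => sq_nonneg (v j)) (mem_univ i))

lemma enorm'_add_le (u v : ι → ℝ) : enorm' (u + v) ≤ enorm' u + enorm' v := by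
  simpa only [enorm'_eq_norm, WithLp.toLp_add] using norm_add_le _ _

lemma enorm'_const (c : ℝ) : enorm' (fun _ : ι => c) = |c| * √(Fintype.card ι) := by
  rw [enorm', sum_const, card_univ, nsmul_eq_mul, Real.sqrt_mul (Nat.cast_nonneg _),
    Real.sqrt_sq_eq_abs, mul_comm]

end EuclideanNorm

lemma sum_sq_le_two_mul_sq_sum_posPart {ι : Type*} (t : Finset ι) (w : ι → ℝ)
    (hw : 0 ≤ ∑ i ∈ t, w i) : ∑ i ∈ t, w i ^ 2 ≤ 2 * (∑ i ∈ t, (w i)⁺) ^ 2 := by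
  have hsplit : ∀ a : ℝ, a ^ 2 = a⁺ ^ 2 + a⁻ ^ 2 := by
    intro a
    rcases le_total a 0 with ha | ha
    · simp [posPart_eq_zero.2 ha, negPart_eq_neg.2 ha]
    · simp [posPart_eq_self.2 ha, negPart_eq_zero.2 ha]
  have hneg : ∑ i ∈ t, (w i)⁻ ≤ ∑ i ∈ t, (w i)⁺ := by
    have : ∑ i ∈ t, (w i)⁺ - ∑ i ∈ t, (w i)⁻ = ∑ i ∈ t, w i := by
      rw [← sum_sub_distrib]; simp only [posPart_sub_negPart]
    linarith
  have hneg0 : 0 ≤ ∑ i ∈ t, (w i)⁻ := sum_nonneg fun i _ => negPart_nonneg _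
  calc ∑ i ∈ t, w i ^ 2 = ∑ i ∈ t, (w i)⁺ ^ 2 + ∑ i ∈ t, (w i)⁻ ^ 2 := by
        rw [← sum_add_distrib]; exact sum_congr rfl fun i _ => hsplit _
    _ ≤ (∑ i ∈ t, (w i)⁺) ^ 2 + (∑ i ∈ t, (w i)⁻) ^ 2 :=
        add_le_add (sum_sq_le_sq_sum_of_nonneg fun i _ => posPart_nonneg _)
          (sum_sq_le_sq_sum_of_nonneg fun i _ => negPart_nonneg _)
    _ ≤ 2 * (∑ i ∈ t, (w i)⁺) ^ 2 := by nlinarith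

lemma four_mul_posPart_mul_le_sq {x s dx ds m r : ℝ} (hm : m ≤ x * s)
    (h : s * dx + x * ds = r) : 4 * m * (dx * ds)⁺ ≤ r ^ 2 := by
  rcases le_total (dx * ds) 0 with hd | hd
  · simp [posPart_eq_zero.2 hd, sq_nonneg]
  · rw [posPart_eq_self.2 hd, ← h]
    calc 4 * m * (dx * ds) ≤ 4 * (x * s) * (dx * ds) := by gcongr
      _ = 4 * (s * dx) * (x * ds) := by ring
      _ ≤ (s * dx + x * ds) ^ 2 := four_mul_le_sq_add _ _

lemma enorm'_mul_le_of_newton {ι : Type*} [Fintype ι] {x s dx ds : ι → ℝ} {τ α : ℝ}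
    (hτ : 0 < τ) (hα : α < 1) (hcen : enorm' (fun i => x i * s i - τ) ≤ α * τ)
    (hnewton : ∀ i, s i * dx i + x i * ds i = τ - x i * s i) (horth : 0 ≤ dx ⬝ᵥ ds) :
    enorm' (fun i => dx i * ds i) ≤ α ^ 2 / (2 * (1 - α)) * τ := by
  have hατ : 0 ≤ α * τ := (enorm'_nonneg _).trans hcen
  have hm : 0 < 4 * ((1 - α) * τ) := by have := sub_pos.2 hα; positivity
  have hlow : ∀ i, (1 - α) * τ ≤ x i * s i := fun i => by
    have := (abs_le_enorm' _ i).trans hcen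
    linarith [neg_abs_le (x i * s i - τ)]
  have hP : (∑ i, (dx i * ds i)⁺) * (4 * ((1 - α) * τ)) ≤ (α * τ) ^ 2 := by
    rw [sum_mul]
    calc ∑ i, (dx i * ds i)⁺ * (4 * ((1 - α) * τ)) ≤ ∑ i, (x i * s i - τ) ^ 2 := by
          refine sum_le_sum fun i _ => ?_
          have := four_mul_posPart_mul_le_sq (hlow i) (hnewton i)
          nlinarith
      _ ≤ (α * τ) ^ 2 := (enorm'_le_iff hατ).1 hcen
  have hP' : ∑ i, (dx i * ds i)⁺ ≤ α ^ 2 / (2 * (1 - α)) * τ / 2 := by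
    have h1α : 1 - α ≠ 0 := (sub_pos.2 hα).ne'
    rw [show α ^ 2 / (2 * (1 - α)) * τ / 2 = (α * τ) ^ 2 / (4 * ((1 - α) * τ)) by
      field_simp; ring]
    exact (le_div_iff₀ hm).2 hP
  have hP0 : 0 ≤ ∑ i, (dx i * ds i)⁺ := sum_nonneg fun i _ => posPart_nonneg _
  rw [enorm'_le_iff (hP0.trans (hP'.trans (by linarith)))]
  calc ∑ i, (dx i * ds i) ^ 2 ≤ 2 * (∑ i, (dx i * ds i)⁺) ^ 2 :=
        sum_sq_le_two_mul_sq_sum_posPart _ _ horth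
    _ ≤ 2 * (α ^ 2 / (2 * (1 - α)) * τ / 2) ^ 2 := by gcongr
    _ ≤ (α ^ 2 / (2 * (1 - α)) * τ) ^ 2 := by nlinarith [sq_nonneg (α ^ 2 / (2 * (1 - α)) * τ)]

lemma dotProduct_nonneg_of_saddle_system {m k : Type*} [Fintype m] [Fintype k]
    {H : Matrix m m ℝ} (hH : H.PosSemidef) {c : ℝ} (hc : 0 ≤ c) (A : Matrix m k ℝ)
    {z : m → ℝ} {u v : k → ℝ} (h₁ : c • H *ᵥ z + A *ᵥ u = 0) (h₂ : Aᵀ *ᵥ z + v = 0) :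
    0 ≤ u ⬝ᵥ v := by
  have hv : v = -(Aᵀ *ᵥ z) := eq_neg_of_add_eq_zero_right h₂
  have hu : A *ᵥ u = -(c • H *ᵥ z) := eq_neg_of_add_eq_zero_right h₁
  have : u ⬝ᵥ v = c * (z ⬝ᵥ H *ᵥ z) := by
    rw [hv, dotProduct_neg, dotProduct_mulVec, vecMul_transpose, hu, neg_dotProduct, neg_neg,
      smul_dotProduct, smul_eq_mul, dotProduct_comm]
  rw [this]
  exact mul_nonneg hc (by simpa using hH.dotProduct_mulVec_nonneg z)

lemma pos_and_pos_of_mul_pos_of_add_pos {x s a b : ℝ} (hx : 0 < x) (hs : 0 < s)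
    (hab : 0 < a * b) (h : 0 < s * a + x * b) : 0 < a ∧ 0 < b := by
  rcases mul_pos_iff.1 hab with hpos | ⟨ha, hb⟩
  · exact hpos
  · nlinarith [mul_pos hs (neg_pos.2 ha), mul_pos hx (neg_pos.2 hb)]

lemma newton_step_parameters {α σ β r : ℝ} (hα : α ∈ Set.Ioo (0 : ℝ) (1 / 2)) (hr : 0 < r)
    (hσ : σ = α ^ 2 / (2 * (1 - α))) (hβ : β = (α - σ) / (1 + α / r)) :
    σ < 1 ∧ 0 ≤ β ∧ σ + β = α * (1 - β / r) := by
  obtain ⟨hα0, hα2⟩ := hα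
  have hσα : σ < α := by
    rw [hσ, div_lt_iff₀ (by linarith)]
    nlinarith
  have hden : 0 < 1 + α / r := by positivity
  refine ⟨by linarith, by rw [hβ]; exact div_nonneg (by linarith) hden.le, ?_⟩
  have : β * (1 + α / r) = α - σ := by rw [hβ]; field_simp
  field_simp at this ⊢
  linarith

theorem exact_newton_step_invariance_general (n : ℕ) (hn : 0 < n)
    (α σ β : ℝ) (hα : α ∈ Set.Ioo (0:ℝ) (1/2))
    (hσ : σ = α ^ 2 / (2 * (1 - α)))
    (hβ : β = (α - σ) / (1 + α / Real.sqrt (2 * n)))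
    (Ht : Matrix (Fin n) (Fin n) ℝ) (hHt : Ht.PosSemidef)
    (lam : ℝ) (hlam : 0 ≤ lam)
    (Ω : Matrix (Fin n) (Fin n ⊕ Fin n) ℝ)
    (τ : ℝ) (hτ : 0 < τ)
    (x s : Fin n ⊕ Fin n → ℝ)
    (hx : ∀ i, 0 < x i) (hs : ∀ i, 0 < s i)
    (hcen : enorm' (fun i => x i * s i - τ) ≤ α * τ)
    (Δz : Fin n → ℝ) (Δx Δs : Fin n ⊕ Fin n → ℝ)
    (heq1 : (2 * lam) • Ht.mulVec Δz + Ω.mulVec Δx = 0)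
    (heq2 : Ωᵀ.mulVec Δz + Δs = 0)
    (heq3 : (fun i => s i * Δx i + x i * Δs i) = fun i => τ - x i * s i)
    (xp sp : Fin n ⊕ Fin n → ℝ)
    (hxp : xp = x + Δx) (hsp : sp = s + Δs)
    (τp : ℝ) (hτp : τp = (1 - β / Real.sqrt (2 * n)) * τ) :
    (∀ i, 0 ≤ xp i) ∧ (∀ i, 0 ≤ sp i) ∧
    enorm' (fun i => xp i * sp i - τp) ≤ α * τp := by
  set r := Real.sqrt (2 * n)
  have hr : 0 < r := Real.sqrt_pos.2 (by positivity)
  obtain ⟨hσ1, hβ0, hσβ⟩ := newton_step_parameters hα hr hσ hβ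
  have hnewton : ∀ i, s i * Δx i + x i * Δs i = τ - x i * s i := fun i => congrFun heq3 i
  have hw : enorm' (fun i => Δx i * Δs i) ≤ σ * τ := hσ ▸
    enorm'_mul_le_of_newton hτ (by linarith [hα.2]) hcen hnewton
      (dotProduct_nonneg_of_saddle_system hHt (by positivity) Ω heq1 heq2)
  have hprod : ∀ i, xp i * sp i = τ + Δx i * Δs i := fun i => by
    simp only [hxp, hsp, Pi.add_apply]; linear_combination hnewton i
  have hpos : ∀ i, 0 < xp i ∧ 0 < sp i := fun i => by
    refine pos_and_pos_of_mul_pos_of_add_pos (hx i) (hs i) ?_ ?_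
    · have := (abs_le_enorm' _ i).trans hw
      rw [hprod]
      nlinarith [neg_abs_le (Δx i * Δs i)]
    · simp only [hxp, hsp, Pi.add_apply]
      nlinarith [hnewton i, mul_pos (hx i) (hs i)]
  refine ⟨fun i => (hpos i).1.le, fun i => (hpos i).2.le, ?_⟩
  have hsplit : (fun i => xp i * sp i - τp)
      = (fun i => Δx i * Δs i) + fun _ => β * τ / r := by
    funext i
    simp only [hprod, hτp, Pi.add_apply]
    field_simp
    ring
  have hconst : enorm' (fun _ : Fin n ⊕ Fin n => β * τ / r) = β * τ := by
    have hcard : (Fintype.card (Fin n ⊕ Fin n) : ℝ) = 2 * n := by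
      rw [Fintype.card_sum, Fintype.card_fin]; push_cast; ring
    rw [enorm'_const, hcard, abs_of_nonneg (by positivity), div_mul_cancel₀ _ hr.ne']
  calc enorm' (fun i => xp i * sp i - τp)
      ≤ enorm' (fun i => Δx i * Δs i) + enorm' (fun _ : Fin n ⊕ Fin n => β * τ / r) :=
        hsplit ▸ enorm'_add_le _ _
    _ ≤ σ * τ + β * τ := by rw [hconst]; linarith
    _ = α * τp := by rw [hτp]; linear_combination τ * hσβ

/-- Corollary 1 of the paper, one step: the next iterate of the exact
Newton step is nonnegative and stays in the `α`-neighborhood of the central path with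
`τ⁺ = (1 − β/√(2n))τ`, where `σ = α²/(2(1−α))` and `β = (α−σ)/(1 + α/√(2n))`. -/
theorem exact_newton_step_invariance (n : ℕ) (hn : 0 < n)
    (α σ β : ℝ) (hα : α ∈ Set.Ioo (0:ℝ) (1/2))
    (hσ : σ = α ^ 2 / (2 * (1 - α)))
    (hβ : β = (α - σ) / (1 + α / Real.sqrt (2 * n)))
    (Ht : Matrix (Fin n) (Fin n) ℝ) (hHt : Ht.PosSemidef)
    (lam : ℝ) (hlam : 0 ≤ lam)
    (Ω : Matrix (Fin n) (Fin n ⊕ Fin n) ℝ)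
    (hΩ : Ω = Matrix.fromCols (1 : Matrix (Fin n) (Fin n) ℝ) (-1))
    (τ : ℝ) (hτ : 0 < τ)
    (x s : Fin n ⊕ Fin n → ℝ)
    (hx : ∀ i, 0 < x i) (hs : ∀ i, 0 < s i)
    (hcen : enorm' (fun i => x i * s i - τ) ≤ α * τ)
    (Δz : Fin n → ℝ) (Δx Δs : Fin n ⊕ Fin n → ℝ)
    (heq1 : (2 * lam) • Ht.mulVec Δz + Ω.mulVec Δx = 0)
    (heq2 : Ωᵀ.mulVec Δz + Δs = 0)
    (heq3 : (fun i => s i * Δx i + x i * Δs i) = fun i => τ - x i * s i)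
    (xp sp : Fin n ⊕ Fin n → ℝ)
    (hxp : xp = x + Δx) (hsp : sp = s + Δs)
    (τp : ℝ) (hτp : τp = (1 - β / Real.sqrt (2 * n)) * τ) :
    (∀ i, 0 ≤ xp i) ∧ (∀ i, 0 ≤ sp i) ∧
    enorm' (fun i => xp i * sp i - τp) ≤ α * τp :=
  exact_newton_step_invariance_general n hn α σ β hα hσ hβ Ht hHt lam hlam Ω τ hτ x s hx hs hcen Δz
    Δx Δs heq1 heq2 heq3 xp sp hxp hsp τp hτp
end

section
/- Let n ∈ ℕ₊, let H̃ ∈ ℝ^{n×n}, λ ∈ ℝ, τ > 0, and let γ, θ, φ, ψ ∈ ℝ^n with all components of φ and ψ positive. Suppose Δz ∈ ℝ^n satisfies the compact system (2λH̃ + diag(γ/φ) + diag(θ/ψ))·Δz = τ·(1/ψ) − τ·(1/φ) + γ − θ, and define Δγ = (γ/φ) ⊙ Δz + τ·(1/φ) − γ, Δθ = −(θ/ψ) ⊙ Δz + τ·(1/ψ) − θ, Δφ = −Δz, Δψ = Δz. Then with Ω = [I, −I] ∈ ℝ^{n×2n}, Δx = col(Δγ, Δθ), Δs = col(Δφ,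 Δψ), x = col(γ, θ), and s = col(φ, ψ), the full Newton system holds: 2λH̃Δz + ΩΔx = 0, ΩᵀΔz + Δs = 0, and s ⊙ Δx + x ⊙ Δs = τe − x ⊙ s. -/
open Matrix

section Omega

variable {m R : Type*} [Fintype m] [DecidableEq m] [Ring R]

theorem fromCols_one_neg_one_mulVec_sumElim (u v : m → R) :
    (fromCols (1 : Matrix m m R) (-1)) *ᵥ Sum.elim u v = u - v := by
  rw [fromCols_mulVec_sumElim, neg_mulVec, one_mulVec, one_mulVec, sub_eq_add_neg]

theorem transpose_fromCols_one_neg_one_mulVec (w : m → R) :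
    (fromCols (1 : Matrix m m R) (-1))ᵀ *ᵥ w = Sum.elim w (-w) := by
  rw [transpose_fromCols, fromRows_mulVec, transpose_neg, transpose_one, neg_mulVec, one_mulVec]

end Omega

theorem mulVec_add_diagonal_add_diagonal {m R : Type*} [Fintype m] [DecidableEq m] [CommRing R]
    (M : Matrix m m R) (a b z : m → R) (i : m) :
    ((M + diagonal a + diagonal b) *ᵥ z) i = (M *ᵥ z) i + a i * z i + b i * z i := by
  simp only [add_mulVec, mulVec_diagonal, Pi.add_apply]

theorem mul_backSubst_add_mul_neg {K : Type*} [Field K] {s : K} (hs : s ≠ 0) (x τ d : K) :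
    s * (x / s * d + τ * s⁻¹ - x) + x * -d = τ - x * s := by
  field_simp
  ring

theorem compact_implies_full_newton_general (n : ℕ)
    (Ht : Matrix (Fin n) (Fin n) ℝ) (lam : ℝ) (τ : ℝ)
    (γ θ φ ψ : Fin n → ℝ)
    (hφ : ∀ i, 0 < φ i) (hψ : ∀ i, 0 < ψ i)
    (Δz : Fin n → ℝ)
    (hcompact : ((2 * lam) • Ht + Matrix.diagonal (fun i => γ i / φ i)
        + Matrix.diagonal (fun i => θ i / ψ i)).mulVec Δz
      = fun i => τ * (ψ i)⁻¹ - τ * (φ i)⁻¹ + γ i - θ i)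
    (Δγ Δθ Δφ Δψ : Fin n → ℝ)
    (hΔγ : Δγ = fun i => (γ i / φ i) * Δz i + τ * (φ i)⁻¹ - γ i)
    (hΔθ : Δθ = fun i => -(θ i / ψ i) * Δz i + τ * (ψ i)⁻¹ - θ i)
    (hΔφ : Δφ = -Δz) (hΔψ : Δψ = Δz)
    (Ω : Matrix (Fin n) (Fin n ⊕ Fin n) ℝ)
    (hΩ : Ω = Matrix.fromCols (1 : Matrix (Fin n) (Fin n) ℝ) (-1))
    (Δx Δs x s : Fin n ⊕ Fin n → ℝ)
    (hΔx : Δx = Sum.elim Δγ Δθ) (hΔs : Δs = Sum.elim Δφ Δψ)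
    (hxdef : x = Sum.elim γ θ) (hsdef : s = Sum.elim φ ψ) :
    (2 * lam) • Ht.mulVec Δz + Ω.mulVec Δx = 0 ∧
    Ωᵀ.mulVec Δz + Δs = 0 ∧
    (fun i => s i * Δx i + x i * Δs i) = fun i => τ - x i * s i := by
  subst Δγ Δθ Δφ Δψ Ω Δx Δs x s
  refine ⟨?_, ?_, ?_⟩
  · rw [fromCols_one_neg_one_mulVec_sumElim]
    funext i
    have hi := congrFun hcompact i
    rw [mulVec_add_diagonal_add_diagonal, smul_mulVec] at hi
    simp only [Pi.add_apply, Pi.sub_apply, Pi.smul_apply, Pi.zero_apply] at hi ⊢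
    linarith
  · rw [transpose_fromCols_one_neg_one_mulVec]
    funext i
    cases i <;> simp
  · funext i
    cases i with
    | inl i => exact mul_backSubst_add_mul_neg (hφ i).ne' (γ i) τ (Δz i)
    | inr i =>
      simpa [neg_div, mul_neg] using mul_backSubst_add_mul_neg (hψ i).ne' (θ i) τ (-Δz i)

/-- the solution of the compact linear system, together with the
back-substitutions for `Δγ, Δθ, Δφ, Δψ`, solves the full exact Newton system. -/
theorem compact_implies_full_newton (n : ℕ) (hn : 0 < n)
    (Ht : Matrix (Fin n) (Fin n) ℝ) (lam : ℝ) (τ : ℝ) (hτ : 0 < τ)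
    (γ θ φ ψ : Fin n → ℝ)
    (hφ : ∀ i, 0 < φ i) (hψ : ∀ i, 0 < ψ i)
    (Δz : Fin n → ℝ)
    (hcompact : ((2 * lam) • Ht + Matrix.diagonal (fun i => γ i / φ i)
        + Matrix.diagonal (fun i => θ i / ψ i)).mulVec Δz
      = fun i => τ * (ψ i)⁻¹ - τ * (φ i)⁻¹ + γ i - θ i)
    (Δγ Δθ Δφ Δψ : Fin n → ℝ)
    (hΔγ : Δγ = fun i => (γ i / φ i) * Δz i + τ * (φ i)⁻¹ - γ i)
    (hΔθ : Δθ = fun i => -(θ i / ψ i) * Δz i + τ * (ψ i)⁻¹ - θ i)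
    (hΔφ : Δφ = -Δz) (hΔψ : Δψ = Δz)
    (Ω : Matrix (Fin n) (Fin n ⊕ Fin n) ℝ)
    (hΩ : Ω = Matrix.fromCols (1 : Matrix (Fin n) (Fin n) ℝ) (-1))
    (Δx Δs x s : Fin n ⊕ Fin n → ℝ)
    (hΔx : Δx = Sum.elim Δγ Δθ) (hΔs : Δs = Sum.elim Δφ Δψ)
    (hxdef : x = Sum.elim γ θ) (hsdef : s = Sum.elim φ ψ) :
    (2 * lam) • Ht.mulVec Δz + Ω.mulVec Δx = 0 ∧
    Ωᵀ.mulVec Δz + Δs = 0 ∧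
    (fun i => s i * Δx i + x i * Δs i) = fun i => τ - x i * s i :=
  compact_implies_full_newton_general n Ht lam τ γ θ φ ψ hφ hψ Δz hcompact Δγ Δθ Δφ Δψ hΔγ hΔθ hΔφ
    hΔψ Ω hΩ Δx Δs x s hΔx hΔs hxdef hsdef
end

section
/- Let N ∈ ℕ, η ∈ (0,1), δ > 0, and let a₀, a₁, …, a_N be positive real numbers such that |a_{k+1} − a_k| ≤ η·a_k for every k with 0 ≤ k < N. Let K ⊆ {0, 1, …, N} be a set such that for every pair of consecutive elements k₁ < k₂ of K (i.e., k₁, k₂ ∈ K and no element of K lies strictly between them), the ratio a_{k₂}/a_{k₁} lies outside the interval [1/(1+δ), 1+δ]. Then (|K| − 1)·log(1+δ) ≤ (1/(1−η))·Σ_{k=0}^{N−1} |a_{k+1} − a_k|/a_k. -/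
/-- scalar counting lemma for lazy rank-1 updates: if consecutive refresh
indices in `K` have ratios outside `[1/(1+δ), 1+δ]`, then
`(|K| − 1)·log(1+δ) ≤ (1/(1−η))·Σ_{k<N} |a_{k+1} − a_k|/a_k`. -/
theorem scalar_counting_lemma (N : ℕ) (η δ : ℝ)
    (hη : η ∈ Set.Ioo (0:ℝ) 1) (hδ : 0 < δ)
    (a : ℕ → ℝ) (hpos : ∀ k ≤ N, 0 < a k)
    (hstep : ∀ k < N, |a (k + 1) - a k| ≤ η * a k)
    (K : Finset ℕ) (hK : K ⊆ Finset.range (N + 1))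
    (hcons : ∀ k₁ ∈ K, ∀ k₂ ∈ K, k₁ < k₂ → (∀ k ∈ K, ¬(k₁ < k ∧ k < k₂)) →
      a k₂ / a k₁ ∉ Set.Icc (1 / (1 + δ)) (1 + δ)) :
    ((K.card : ℝ) - 1) * Real.log (1 + δ)
      ≤ (1 / (1 - η)) * ∑ k ∈ Finset.range N, |a (k + 1) - a k| / a k := by
  obtain ⟨hη0, hη1⟩ := hη
  have h1η : 0 < 1 - η := by linarith
  set c : ℝ := 1 / (1 - η) with hc
  have hc0 : 0 < c := by positivity
  have hc1 : 1 ≤ c := by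
    rw [hc, le_div_iff₀ h1η]; linarith
  set g : ℕ → ℝ := fun m => ∑ k ∈ Finset.range m, |a (k + 1) - a k| / a k with hg
  have hterm : ∀ k, k < N → 0 ≤ |a (k + 1) - a k| / a k := fun k hk =>
    div_nonneg (abs_nonneg _) (hpos k hk.le).le
  have hgmono : ∀ m n, m ≤ n → n ≤ N → g m ≤ g n := by
    intro m n hmn hn
    apply Finset.sum_le_sum_of_subset_of_nonneg (Finset.range_subset_range.2 hmn)
    intro k hk _
    exact hterm k (lt_of_lt_of_le (Finset.mem_range.1 hk) hn)
  have hg0 : ∀ m, m ≤ N → 0 ≤ g m := by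
    intro m hm
    have := hgmono 0 m (Nat.zero_le _) hm
    simpa [hg] using this
  have hL0 : 0 ≤ Real.log (1 + δ) := Real.log_nonneg (by linarith)
  -- per-step bound
  have hstepB : ∀ k, k < N →
      |Real.log (a (k + 1)) - Real.log (a k)| ≤ c * (|a (k + 1) - a k| / a k) := by
    intro k hk
    have hak : 0 < a k := hpos k hk.le
    have hak1 : 0 < a (k + 1) := hpos (k + 1) hk
    have habs := abs_le.1 (hstep k hk)
    have hlow : (1 - η) * a k ≤ a (k + 1) := by nlinarith [habs.1]
    rcases le_or_gt (a k) (a (k + 1)) with h | h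
    · have hd : 0 ≤ Real.log (a (k + 1)) - Real.log (a k) :=
        sub_nonneg.2 (Real.log_le_log hak h)
      rw [abs_of_nonneg hd, ← Real.log_div hak1.ne' hak.ne']
      have h1 : Real.log (a (k + 1) / a k) ≤ a (k + 1) / a k - 1 :=
        Real.log_le_sub_one_of_pos (div_pos hak1 hak)
      have h2 : a (k + 1) / a k - 1 = (a (k + 1) - a k) / a k := by
        field_simp
      have h3 : (a (k + 1) - a k) / a k = |a (k + 1) - a k| / a k := by
        rw [abs_of_nonneg (by linarith)]
      have h4 : |a (k + 1) - a k| / a k ≤ c * (|a (k + 1) - a k| / a k) :=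
        le_mul_of_one_le_left (hterm k hk) hc1
      linarith
    · have hd : Real.log (a (k + 1)) - Real.log (a k) ≤ 0 :=
        sub_nonpos.2 (Real.log_le_log hak1 h.le)
      rw [abs_of_nonpos hd]
      have h1 : Real.log (a k / a (k + 1)) ≤ a k / a (k + 1) - 1 :=
        Real.log_le_sub_one_of_pos (div_pos hak hak1)
      have h2 : Real.log (a k / a (k + 1)) = Real.log (a k) - Real.log (a (k + 1)) :=
        Real.log_div hak.ne' hak1.ne'
      have h3 : a k / a (k + 1) - 1 = (a k - a (k + 1)) / a (k + 1) := by
        field_simp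
    -- (a k - a (k+1)) / a (k+1) ≤ (a k - a (k+1)) / ((1-η) a k) = c * |Δ| / a k
      have habsval : |a (k + 1) - a k| = a k - a (k + 1) := by
        rw [abs_of_nonpos (by linarith)]; ring
      have hlow' : 0 < (1 - η) * a k := by positivity
      have h4 : (a k - a (k + 1)) / a (k + 1) ≤ (a k - a (k + 1)) / ((1 - η) * a k) := by
        have hnum : 0 ≤ a k - a (k + 1) := by linarith
        gcongr
      have h5 : (a k - a (k + 1)) / ((1 - η) * a k) = c * (|a (k + 1) - a k| / a k) := by
        rw [habsval, hc]; field_simp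
      linarith
  -- telescoped bound
  have hA : ∀ m n, m ≤ n → n ≤ N →
      |Real.log (a n) - Real.log (a m)| ≤ c * (g n - g m) := by
    intro m n hmn hnN
    induction n, hmn using Nat.le_induction with
    | base => simp
    | succ n hmn ih =>
      have hnN' : n ≤ N := by omega
      have h1 := ih hnN'
      have h2 := hstepB n (by omega)
      have h3 : g (n + 1) - g n = |a (n + 1) - a n| / a n := by
        simp [hg, Finset.sum_range_succ]
      have h4 : |Real.log (a (n + 1)) - Real.log (a m)| ≤
          |Real.log (a (n + 1)) - Real.log (a n)| + |Real.log (a n) - Real.log (a m)| :=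
        abs_sub_le _ _ _
      have h5 : c * (g (n + 1) - g m)
          = c * (|a (n + 1) - a n| / a n) + c * (g n - g m) := by
        rw [← h3]; ring
      linarith [h1, h2, h4, h5]
  -- main induction
  have main : ∀ (n : ℕ) (K' : Finset ℕ), K'.card = n → K' ⊆ Finset.range (N + 1) →
      (∀ k₁ ∈ K', ∀ k₂ ∈ K', k₁ < k₂ → (∀ k ∈ K', ¬(k₁ < k ∧ k < k₂)) →
        a k₂ / a k₁ ∉ Set.Icc (1 / (1 + δ)) (1 + δ)) →
      ∀ h : K'.Nonempty, ((n : ℝ) - 1) * Real.log (1 + δ) ≤ c * g (K'.max' h) := by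
    intro n
    induction n with
    | zero =>
      intro K' hcard _ _ h
      exact absurd hcard (by simp [Finset.card_eq_zero, Finset.nonempty_iff_ne_empty.1 h])
    | succ n ih =>
      intro K' hcard hsub hcons' h
      have hmaxN : K'.max' h ≤ N :=
        Nat.lt_succ_iff.1 (Finset.mem_range.1 (hsub (K'.max'_mem h)))
      rcases Nat.eq_zero_or_pos n with rfl | hn
      · have h0 : ((0 + 1 : ℕ) : ℝ) - 1 = 0 := by norm_num
        rw [h0, zero_mul]
        exact mul_nonneg hc0.le (hg0 _ hmaxN)
      · set k₂ := K'.max' h with hk₂def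
        set K'' := K'.erase k₂ with hK''
        have hk₂ : k₂ ∈ K' := K'.max'_mem h
        have hK''card : K''.card = n := by
          rw [hK'', Finset.card_erase_of_mem hk₂, hcard]; omega
        have hK''ne : K''.Nonempty := Finset.card_pos.1 (by omega)
        set k₁ := K''.max' hK''ne with hk₁def
        have hk₁mem := K''.max'_mem hK''ne
        have hk₁K : k₁ ∈ K' := (Finset.mem_erase.1 hk₁mem).2
        have hk₁ne : k₁ ≠ k₂ := (Finset.mem_erase.1 hk₁mem).1
        have hk₁lt : k₁ < k₂ := lt_of_le_of_ne (K'.le_max' _ hk₁K) hk₁ne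
        have hbetween : ∀ k ∈ K', ¬(k₁ < k ∧ k < k₂) := by
          rintro k hk ⟨h1, h2⟩
          have hkK'' : k ∈ K'' := Finset.mem_erase.2 ⟨Nat.ne_of_lt h2, hk⟩
          exact absurd (K''.le_max' k hkK'') (not_le.2 h1)
        have hratio := hcons' k₁ hk₁K k₂ hk₂ hk₁lt hbetween
        have hk₂N : k₂ ≤ N := hmaxN
        have hk₁N : k₁ ≤ N := le_trans hk₁lt.le hk₂N
        have hak₁ : 0 < a k₁ := hpos k₁ hk₁N
        have hak₂ : 0 < a k₂ := hpos k₂ hk₂N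
        -- log gap
        have hlog : Real.log (1 + δ) ≤ |Real.log (a k₂) - Real.log (a k₁)| := by
          rw [← Real.log_div hak₂.ne' hak₁.ne']
          set r := a k₂ / a k₁ with hr
          have hr0 : 0 < r := div_pos hak₂ hak₁
          rw [Set.mem_Icc, not_and_or, not_le, not_le] at hratio
          rcases hratio with hlt | hgt
          · have h1 : Real.log r < Real.log (1 / (1 + δ)) :=
              Real.log_lt_log hr0 hlt
            rw [Real.log_div one_ne_zero (by positivity), Real.log_one] at h1
            have : Real.log (1 + δ) ≤ -(Real.log r) := by linarith
            calc Real.log (1 + δ) ≤ -(Real.log r) := this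
              _ ≤ |Real.log r| := neg_le_abs _
          · have h1 : Real.log (1 + δ) < Real.log r :=
              Real.log_lt_log (by linarith) hgt
            exact le_trans h1.le (le_abs_self _)
        have hAk := hA k₁ k₂ hk₁lt.le hk₂N
        have hstep2 : Real.log (1 + δ) ≤ c * (g k₂ - g k₁) := le_trans hlog hAk
        -- inductive hypothesis
        have hconsK'' : ∀ p ∈ K'', ∀ q ∈ K'', p < q → (∀ k ∈ K'', ¬(p < k ∧ k < q)) →
            a q / a p ∉ Set.Icc (1 / (1 + δ)) (1 + δ) := by
          intro p hp q hq hpq hbet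
          apply hcons' p (Finset.mem_of_mem_erase hp) q (Finset.mem_of_mem_erase hq) hpq
          rintro k hk ⟨h1, h2⟩
          have hkq : k ≠ k₂ := by
            have hq' : q ≤ k₁ := K''.le_max' q hq
            omega
          exact hbet k (Finset.mem_erase.2 ⟨hkq, hk⟩) ⟨h1, h2⟩
        have hih := ih K'' hK''card (fun x hx => hsub (Finset.mem_of_mem_erase hx))
          hconsK'' hK''ne
        rw [← hk₁def] at hih
        push_cast
        nlinarith [hih, hstep2]
  -- conclude
  rcases K.eq_empty_or_nonempty with rfl | hne
  · simp only [Finset.card_empty, Nat.cast_zero, zero_sub, neg_one_mul]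
    have : (0:ℝ) ≤ (1 / (1 - η)) * ∑ k ∈ Finset.range N, |a (k + 1) - a k| / a k :=
      mul_nonneg hc0.le (hg0 N le_rfl)
    linarith
  · have hmaxN : K.max' hne ≤ N :=
      Nat.lt_succ_iff.1 (Finset.mem_range.1 (hK (K.max'_mem hne)))
    have := main K.card K rfl hK hcons hne
    calc ((K.card : ℝ) - 1) * Real.log (1 + δ) ≤ c * g (K.max' hne) := this
      _ ≤ c * g N := by
          apply mul_le_mul_of_nonneg_left (hgmono _ N hmaxN le_rfl) hc0.le
      _ = (1 / (1 - η)) * ∑ k ∈ Finset.range N, |a (k + 1) - a k| / a k := by rw [hc, hg]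
end

section
/- Let n, N ∈ ℕ₊, η ∈ (0,1), δ > 0, and let γ¹, γ², …, γ^N ∈ ℝ^n be vectors with all components positive such that ‖(γ^{k+1} − γ^k)/γ^k‖ ≤ η (componentwise quotient, Euclidean norm) for every k with 1 ≤ k < N. For each coordinate i ∈ {1, …, n}, let K_i ⊆ {1, …, N} be a set containing 1 such that for every pair of consecutive elements k₁ < k₂ of K_i, the ratio γ^{k₂}_i/γ^{k₁}_i lies outside the interval [1/(1+δ), 1+δ]. Then Σ_{i=1}^{n} (|K_i| − 1) ≤ η·(N−1)·√n / ((1−η)·log(1+δ)). -/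
/-!
Put `L_i(k) = log γ^k_i`. Consecutive elements of `K_i` are at distance at least `log (1 + δ)`
along the path `k ↦ L_i(k)`, so `(|K_i| - 1) log (1 + δ)` is at most the total variation of `L_i`
on `[1, N]`. A single step of the iteration moves each coordinate by
`|log (1 + x_i)| ≤ |x_i| / (1 - η)`, where `x` is the relative change with `‖x‖ ≤ η`, and
Cauchy–Schwarz gives `∑ i, |x_i| ≤ √n ‖x‖`. Summing over the `N - 1` steps and exchanging the
order of summation gives the bound.
-/

open Finset Real

theorem card_sub_one_mul_le_sum_dist {α : Type*} [PseudoMetricSpace α] (f : ℕ → α) {c : ℝ}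
    (hc : 0 ≤ c) (S : Finset ℕ) {a b : ℕ} (hS : S ⊆ Icc a b)
    (hgap : ∀ k₁ ∈ S, ∀ k₂ ∈ S, k₁ < k₂ → (∀ k ∈ S, ¬(k₁ < k ∧ k < k₂)) →
      c ≤ dist (f k₁) (f k₂)) :
    ((#S : ℝ) - 1) * c ≤ ∑ k ∈ Ico a b, dist (f k) (f (k + 1)) := by
  have hsum_nonneg : ∀ a, 0 ≤ ∑ k ∈ Ico a b, dist (f k) (f (k + 1)) :=
    fun _ ↦ sum_nonneg fun _ _ ↦ dist_nonneg
  induction S using Finset.induction_on_min generalizing a with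
  | empty => simpa using (hsum_nonneg a).trans' (neg_nonpos.2 hc)
  | insert m s hm ih =>
    rcases s.eq_empty_or_nonempty with rfl | hs
    · simpa using hsum_nonneg a
    set m' := s.min' hs
    have hm's : m' ∈ s := s.min'_mem hs
    have hmm' : m < m' := hm m' hm's
    have ham : a ≤ m := (mem_Icc.1 (hS (mem_insert_self m s))).1
    have hm'b : m' ≤ b := (mem_Icc.1 (hS (mem_insert_of_mem hm's))).2
    have hfirst : c ≤ dist (f m) (f m') := by
      refine hgap m (mem_insert_self m s) m' (mem_insert_of_mem hm's) hmm' fun k hk ⟨hmk, hkm'⟩ ↦ ?_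
      rcases mem_insert.1 hk with rfl | hk
      · exact hmk.false
      · exact (s.min'_le k hk).not_gt hkm'
    have hrest : ((#s : ℝ) - 1) * c ≤ ∑ k ∈ Ico m' b, dist (f k) (f (k + 1)) := by
      refine ih (fun k hk ↦ mem_Icc.2 ⟨s.min'_le k hk, (mem_Icc.1 (hS (mem_insert_of_mem hk))).2⟩)
        fun k₁ hk₁ k₂ hk₂ hlt hbetw ↦ hgap k₁ (mem_insert_of_mem hk₁) k₂ (mem_insert_of_mem hk₂) hlt
          fun k hk ⟨hk₁k, hkk₂⟩ ↦ ?_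
      rcases mem_insert.1 hk with rfl | hk
      · exact (hm k₁ hk₁).not_gt hk₁k
      · exact hbetw k hk ⟨hk₁k, hkk₂⟩
    calc ((#(insert m s) : ℝ) - 1) * c = c + ((#s : ℝ) - 1) * c := by
          rw [card_insert_of_notMem fun h ↦ (hm m h).false]; push_cast; ring
      _ ≤ ∑ k ∈ Ico m m', dist (f k) (f (k + 1)) + ∑ k ∈ Ico m' b, dist (f k) (f (k + 1)) :=
          add_le_add (hfirst.trans (dist_le_Ico_sum_dist f hmm'.le)) hrest
      _ = ∑ k ∈ Ico m b, dist (f k) (f (k + 1)) := sum_Ico_consecutive _ hmm'.le hm'b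
      _ ≤ ∑ k ∈ Ico a b, dist (f k) (f (k + 1)) :=
          sum_le_sum_of_subset_of_nonneg (Ico_subset_Ico ham le_rfl) fun _ _ _ ↦ dist_nonneg

theorem log_le_dist_log_of_div_notMem_Icc {x y t : ℝ} (hx : 0 < x) (hy : 0 < y) (ht : 0 < t)
    (h : y / x ∉ Set.Icc (1 / t) t) : log t ≤ dist (log x) (log y) := by
  rw [dist_comm, Real.dist_eq, ← log_div hy.ne' hx.ne']
  rw [Set.mem_Icc, not_and_or, not_le, not_le] at h
  rcases h with h | h
  · have hlog := log_lt_log (div_pos hy hx) h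
    rw [one_div, log_inv] at hlog
    exact (lt_neg.1 hlog).le.trans (neg_le_abs _)
  · exact (log_lt_log ht h).le.trans (le_abs_self _)

theorem abs_log_one_add_le_div {x η : ℝ} (hx : |x| ≤ η) (hη : η < 1) :
    |log (1 + x)| ≤ |x| / (1 - η) := by
  have h := abs_log_sub_add_sum_range_le (x := -x) (by rw [abs_neg]; linarith) 0
  simp only [range_zero, sum_empty, zero_add, sub_neg_eq_add, abs_neg, pow_one] at h
  exact h.trans <| div_le_div_of_nonneg_left (abs_nonneg x) (by linarith : 0 < 1 - η)
    (by linarith : 1 - η ≤ 1 - |x|)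

theorem sum_abs_log_one_add_le {ι : Type*} [Fintype ι] {x : ι → ℝ} {η : ℝ} (hη : η < 1)
    (hx : √(∑ i, x i ^ 2) ≤ η) :
    ∑ i, |log (1 + x i)| ≤ η * √(Fintype.card ι) / (1 - η) := by
  have hxi : ∀ i, |x i| ≤ η := fun i ↦
    (abs_le_sqrt (single_le_sum (fun j _ ↦ sq_nonneg (x j)) (mem_univ i))).trans hx
  have hcs : ∑ i, |x i| ≤ √(Fintype.card ι) * η := by
    have h := sum_mul_le_sqrt_mul_sqrt univ (fun _ ↦ (1 : ℝ)) (fun i ↦ |x i|)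
    simp only [one_mul, one_pow, sum_const, card_univ, nsmul_eq_mul, mul_one, sq_abs] at h
    exact h.trans (mul_le_mul_of_nonneg_left hx (sqrt_nonneg _))
  calc ∑ i, |log (1 + x i)| ≤ ∑ i, |x i| / (1 - η) :=
        sum_le_sum fun i _ ↦ abs_log_one_add_le_div (hxi i) hη
    _ = (∑ i, |x i|) / (1 - η) := (sum_div _ _ _).symm
    _ ≤ √(Fintype.card ι) * η / (1 - η) := by gcongr
    _ = η * √(Fintype.card ι) / (1 - η) := by ring

theorem log_sub_log_eq_log_one_add {a b : ℝ} (ha : 0 < a) (hb : 0 < b) :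
    log b - log a = log (1 + (b - a) / a) := by
  rw [← log_div hb.ne' ha.ne']
  congr 1
  field_simp
  ring

theorem sum_dist_log_le {ι : Type*} [Fintype ι] {u v : ι → ℝ} {η : ℝ} (hu : ∀ i, 0 < u i)
    (hv : ∀ i, 0 < v i) (hη : η < 1) (huv : √(∑ i, ((v i - u i) / u i) ^ 2) ≤ η) :
    ∑ i, dist (log (u i)) (log (v i)) ≤ η * √(Fintype.card ι) / (1 - η) := by
  refine le_of_eq_of_le (sum_congr rfl fun i _ ↦ ?_) (sum_abs_log_one_add_le hη huv)
  rw [Real.dist_eq, abs_sub_comm, log_sub_log_eq_log_one_add (hu i) (hv i)]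

theorem aggregated_counting_bound_general (n N : ℕ) (hN : 0 < N)
    (η δ : ℝ) (hη : η ∈ Set.Ioo (0:ℝ) 1) (hδ : 0 < δ)
    (γ : ℕ → Fin n → ℝ)
    (hpos : ∀ k, 1 ≤ k → k ≤ N → ∀ i, 0 < γ k i)
    (hstep : ∀ k, 1 ≤ k → k < N →
      Real.sqrt (∑ i, ((γ (k + 1) i - γ k i) / γ k i) ^ 2) ≤ η)
    (K : Fin n → Finset ℕ)
    (hKsub : ∀ i, K i ⊆ Finset.Icc 1 N)
    (hcons : ∀ i, ∀ k₁ ∈ K i, ∀ k₂ ∈ K i, k₁ < k₂ → (∀ k ∈ K i, ¬(k₁ < k ∧ k < k₂)) →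
      γ k₂ i / γ k₁ i ∉ Set.Icc (1 / (1 + δ)) (1 + δ)) :
    ∑ i, (((K i).card : ℝ) - 1)
      ≤ η * ((N : ℝ) - 1) * Real.sqrt n / ((1 - η) * Real.log (1 + δ)) := by
  have hc : 0 < log (1 + δ) := log_pos (by linarith)
  let L (i : Fin n) (k : ℕ) : ℝ := log (γ k i)
  have hposK {i : Fin n} {k : ℕ} (hk : k ∈ K i) : 0 < γ k i :=
    hpos k (mem_Icc.1 (hKsub i hk)).1 (mem_Icc.1 (hKsub i hk)).2 i
  have hcoord (i : Fin n) :
      ((#(K i) : ℝ) - 1) * log (1 + δ) ≤ ∑ k ∈ Ico 1 N, dist (L i k) (L i (k + 1)) :=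
    card_sub_one_mul_le_sum_dist (L i) hc.le (K i) (hKsub i) fun k₁ hk₁ k₂ hk₂ hlt hbetw ↦
      log_le_dist_log_of_div_notMem_Icc (hposK hk₁) (hposK hk₂) (by linarith)
        (hcons i k₁ hk₁ k₂ hk₂ hlt hbetw)
  have hiter (k : ℕ) (hk : k ∈ Ico 1 N) :
      ∑ i, dist (L i k) (L i (k + 1)) ≤ η * √n / (1 - η) := by
    obtain ⟨hk1, hkN⟩ := mem_Ico.1 hk
    simpa only [Fintype.card_fin] using sum_dist_log_le (hpos k hk1 hkN.le)
      (hpos (k + 1) (by omega) hkN) hη.2 (hstep k hk1 hkN)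
  have htotal :
      (∑ i, ((#(K i) : ℝ) - 1)) * log (1 + δ) ≤ ((N : ℝ) - 1) * (η * √n / (1 - η)) :=
    calc (∑ i, ((#(K i) : ℝ) - 1)) * log (1 + δ)
        ≤ ∑ i, ∑ k ∈ Ico 1 N, dist (L i k) (L i (k + 1)) := by
          rw [sum_mul]; exact sum_le_sum fun i _ ↦ hcoord i
      _ = ∑ k ∈ Ico 1 N, ∑ i, dist (L i k) (L i (k + 1)) := sum_comm
      _ ≤ ∑ _k ∈ Ico 1 N, η * √n / (1 - η) := sum_le_sum hiter
      _ = ((N : ℝ) - 1) * (η * √n / (1 - η)) := by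
          rw [sum_const, Nat.card_Ico, nsmul_eq_mul, Nat.cast_pred hN]
  rw [← div_div, le_div_iff₀ hc]
  exact htotal.trans_eq (by ring)

/-- aggregated counting bound over all coordinates: the total number of lazy
refreshes is at most `η(N−1)√n / ((1−η)log(1+δ))`. -/
theorem aggregated_counting_bound (n N : ℕ) (hn : 0 < n) (hN : 0 < N)
    (η δ : ℝ) (hη : η ∈ Set.Ioo (0:ℝ) 1) (hδ : 0 < δ)
    (γ : ℕ → Fin n → ℝ)
    (hpos : ∀ k, 1 ≤ k → k ≤ N → ∀ i, 0 < γ k i)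
    (hstep : ∀ k, 1 ≤ k → k < N →
      Real.sqrt (∑ i, ((γ (k + 1) i - γ k i) / γ k i) ^ 2) ≤ η)
    (K : Fin n → Finset ℕ)
    (hKsub : ∀ i, K i ⊆ Finset.Icc 1 N)
    (hone : ∀ i, 1 ∈ K i)
    (hcons : ∀ i, ∀ k₁ ∈ K i, ∀ k₂ ∈ K i, k₁ < k₂ → (∀ k ∈ K i, ¬(k₁ < k ∧ k < k₂)) →
      γ k₂ i / γ k₁ i ∉ Set.Icc (1 / (1 + δ)) (1 + δ)) :
    ∑ i, (((K i).card : ℝ) - 1)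
      ≤ η * ((N : ℝ) - 1) * Real.sqrt n / ((1 - η) * Real.log (1 + δ)) :=
  aggregated_counting_bound_general n N hN η δ hη hδ γ hpos hstep K hKsub hcons
end

section
/- Let m ∈ ℕ₊, let φ₁, …, φ_m ∈ ℝ^d be feature vectors, y₁, …, y_m ∈ {−1, +1} labels, and ρ > 0. Consider the soft-margin SVM problem: minimize (1/2)wᵀw + ρ·Σᵢ ζᵢ over (w, ζ) ∈ ℝ^d × ℝ^m subject to yᵢ·(φᵢᵀw) ≥ 1 − ζᵢ and ζᵢ ≥ 0 for all i. If z* ∈ ℝ^m minimizes (1/2)·(Σᵢ zᵢ yᵢ φᵢ)ᵀ(Σᵢ zᵢ yᵢ φᵢ) − Σᵢ zᵢ over the box {z : 0 ≤ z ≤ ρe}, then w* = Σᵢ z*ᵢ yᵢ φᵢ together with ζ*ᵢ = max(0, 1 − yᵢ·(φᵢᵀw*)) is a minimizer of the soft-margin SVM problem. -/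
open Matrix

private lemma sum_dot {m d : ℕ} (f : Fin m → Fin d → ℝ) (v : Fin d → ℝ) :
    (∑ i, f i) ⬝ᵥ v = ∑ i, f i ⬝ᵥ v := by
  simp only [dotProduct, Finset.sum_apply, Finset.sum_mul]
  exact Finset.sum_comm

private lemma aux_neg (c ε g : ℝ) (hc : 0 ≤ c) (hε : 0 < ε)
    (hq : 0 ≤ ε * g + 1/2 * c * ε ^ 2) (h2 : ε * (c + 1) ≤ -g) : False := by
  nlinarith [mul_pos hε hε, mul_nonneg hc (mul_pos hε hε).le,
    mul_nonneg hε.le (by linarith : (0:ℝ) ≤ -g - ε * (c + 1))]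

private lemma aux_pos (c ε g : ℝ) (hc : 0 ≤ c) (hε : 0 < ε)
    (hq : 0 ≤ -ε * g + 1/2 * c * (-ε) ^ 2) (h2 : ε * (c + 1) ≤ g) : False := by
  nlinarith [mul_pos hε hε, mul_nonneg hc (mul_pos hε hε).le,
    mul_nonneg hε.le (by linarith : (0:ℝ) ≤ g - ε * (c + 1))]

/-- recovery of a soft-margin SVM minimizer from a minimizer of the dual
box-constrained QP: `w* = Σ z*ᵢ yᵢ φᵢ`, `ζ*ᵢ = max(0, 1 − yᵢ(φᵢᵀw*))` is a minimizer
of the soft-margin SVM problem. -/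
theorem svm_recovery (m d : ℕ) (hm : 0 < m)
    (φ : Fin m → Fin d → ℝ) (y : Fin m → ℝ)
    (hy : ∀ i, y i = 1 ∨ y i = -1)
    (ρ : ℝ) (hρ : 0 < ρ)
    (zstar : Fin m → ℝ)
    (hbox : ∀ i, 0 ≤ zstar i ∧ zstar i ≤ ρ)
    (hmin : ∀ z : Fin m → ℝ, (∀ i, 0 ≤ z i ∧ z i ≤ ρ) →
      (1/2) * ((∑ i, zstar i • y i • φ i) ⬝ᵥ (∑ i, zstar i • y i • φ i)) - ∑ i, zstar i
      ≤ (1/2) * ((∑ i, z i • y i • φ i) ⬝ᵥ (∑ i, z i • y i • φ i)) - ∑ i, z i)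
    (wstar : Fin d → ℝ) (hw : wstar = ∑ i, zstar i • y i • φ i)
    (ζstar : Fin m → ℝ) (hζ : ζstar = fun i => max 0 (1 - y i * (φ i ⬝ᵥ wstar))) :
    ((∀ i, 1 - ζstar i ≤ y i * (φ i ⬝ᵥ wstar)) ∧ (∀ i, 0 ≤ ζstar i)) ∧
    (∀ (w : Fin d → ℝ) (ζ : Fin m → ℝ),
      (∀ i, 1 - ζ i ≤ y i * (φ i ⬝ᵥ w)) → (∀ i, 0 ≤ ζ i) →
      (1/2) * (wstar ⬝ᵥ wstar) + ρ * ∑ i, ζstar i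
        ≤ (1/2) * (w ⬝ᵥ w) + ρ * ∑ i, ζ i) := by
  -- notation
  set g : Fin m → ℝ := fun i => y i * (φ i ⬝ᵥ wstar) - 1 with hg
  have hζ' : ∀ i, ζstar i = max 0 (-(g i)) := by
    intro i; rw [hζ]; simp only [hg]; ring_nf
  -- feasibility
  have hfeas1 : ∀ i, 1 - ζstar i ≤ y i * (φ i ⬝ᵥ wstar) := by
    intro i
    rw [hζ']
    have := le_max_right 0 (-(g i))
    simp only [hg] at this ⊢
    linarith
  have hfeas2 : ∀ i, 0 ≤ ζstar i := by
    intro i; rw [hζ']; exact le_max_left _ _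
  refine ⟨⟨hfeas1, hfeas2⟩, ?_⟩
  -- dot product of perturbed sum
  have hdotw : ∀ i, (y i • φ i) ⬝ᵥ wstar = y i * (φ i ⬝ᵥ wstar) := by
    intro i; simp [smul_dotProduct]
  -- quadratic optimality condition in each coordinate
  have hquad : ∀ i (s : ℝ), 0 ≤ zstar i + s → zstar i + s ≤ ρ →
      0 ≤ s * g i + (1/2) * ((y i • φ i) ⬝ᵥ (y i • φ i)) * s ^ 2 := by
    intro i s hs0 hsρ
    set z : Fin m → ℝ := Function.update zstar i (zstar i + s) with hz
    have hzbox : ∀ j, 0 ≤ z j ∧ z j ≤ ρ := by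
      intro j
      by_cases h : j = i
      · subst h; simp [hz, hs0, hsρ]
      · simp [hz, Function.update_of_ne h]; exact hbox j
    have hSz : (∑ j, z j • y j • φ j) = wstar + s • (y i • φ i) := by
      have h1 : ∀ j : Fin m, z j • y j • φ j
          = zstar j • y j • φ j + (if j = i then s • (y i • φ i) else 0) := by
        intro j
        by_cases h : j = i
        · subst h; simp [hz, add_smul]
        · simp [hz, Function.update_of_ne h, h]
      rw [Finset.sum_congr rfl fun j _ => h1 j, Finset.sum_add_distrib,
        Finset.sum_ite_eq' Finset.univ i, hw]
      simp
    have hsumz : (∑ j, z j) = (∑ j, zstar j) + s := by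
      have h1 : ∀ j : Fin m, z j = zstar j + (if j = i then s else 0) := by
        intro j
        by_cases h : j = i
        · subst h; simp [hz]
        · simp [hz, Function.update_of_ne h, h]
      rw [Finset.sum_congr rfl fun j _ => h1 j, Finset.sum_add_distrib,
        Finset.sum_ite_eq' Finset.univ i]
      simp
    have := hmin z hzbox
    rw [hSz, hsumz, ← hw] at this
    have hexp : (wstar + s • (y i • φ i)) ⬝ᵥ (wstar + s • (y i • φ i))
        = wstar ⬝ᵥ wstar + 2 * s * ((y i • φ i) ⬝ᵥ wstar)
          + s ^ 2 * ((y i • φ i) ⬝ᵥ (y i • φ i)) := by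
      simp only [dotProduct_add, add_dotProduct, smul_dotProduct, dotProduct_smul,
        smul_eq_mul]
      rw [dotProduct_comm wstar (φ i)]
      ring
    rw [hexp] at this
    have hgd : (y i • φ i) ⬝ᵥ wstar = g i + 1 := by rw [hdotw i]; simp [hg]
    rw [hgd] at this
    nlinarith [this]
  have hc : ∀ i, 0 ≤ (y i • φ i) ⬝ᵥ (y i • φ i) := by
    intro i
    exact Finset.sum_nonneg fun j _ => mul_self_nonneg _
  -- complementary slackness per coordinate
  have hcomp : ∀ i, zstar i * g i + ρ * ζstar i = 0 := by
    intro i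
    rw [hζ' i]
    set c := (y i • φ i) ⬝ᵥ (y i • φ i) with hcdef
    have hc0 := hc i
    have hc0' : 0 ≤ c := hc0
    rcases lt_trichotomy (g i) 0 with hgi | hgi | hgi
    · -- g i < 0, show zstar i = ρ
      have hzr : zstar i = ρ := by
        by_contra hne
        have hzlt : zstar i < ρ := lt_of_le_of_ne (hbox i).2 hne
        set ε := min (ρ - zstar i) (-(g i) / (c + 1)) with hε
        have hε0 : 0 < ε := lt_min (by linarith) (div_pos (by linarith) (by linarith))
        have h1 : ε ≤ ρ - zstar i := min_le_left _ _
        have h2 : ε ≤ -(g i) / (c + 1) := min_le_right _ _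
        have h2' : ε * (c + 1) ≤ -(g i) :=
          (le_div_iff₀ (by linarith : (0:ℝ) < c + 1)).mp h2
        have hq := hquad i ε (by have := (hbox i).1; linarith) (by linarith)
        rw [← hcdef] at hq
        exact aux_neg c ε (g i) hc0' hε0 hq h2'
      rw [hzr]
      have : max 0 (-(g i)) = -(g i) := max_eq_right (by linarith)
      rw [this]; ring
    · simp [hgi]
    · -- g i > 0, show zstar i = 0
      have hz0 : zstar i = 0 := by
        by_contra hne
        have hzgt : 0 < zstar i := lt_of_le_of_ne (hbox i).1 (Ne.symm hne)
        set ε := min (zstar i) (g i / (c + 1)) with hε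
        have hε0 : 0 < ε := lt_min hzgt (div_pos hgi (by linarith))
        have h1 : ε ≤ zstar i := min_le_left _ _
        have h2 : ε ≤ g i / (c + 1) := min_le_right _ _
        have h2' : ε * (c + 1) ≤ g i :=
          (le_div_iff₀ (by linarith : (0:ℝ) < c + 1)).mp h2
        have hq := hquad i (-ε) (by linarith) (by have := (hbox i).2; linarith)
        rw [← hcdef] at hq
        exact aux_pos c ε (g i) hc0' hε0 hq h2'
      rw [hz0]
      have : max 0 (-(g i)) = 0 := max_eq_left (by linarith)
      rw [this]; ring
  -- wstar ⬝ wstar = ∑ zstar i * (g i + 1)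
  have hww : wstar ⬝ᵥ wstar = ∑ i, zstar i * (g i + 1) := by
    conv_lhs => rw [hw, sum_dot]
    refine Finset.sum_congr rfl fun i _ => ?_
    rw [smul_dotProduct, smul_dotProduct, smul_eq_mul, smul_eq_mul, ← hw]
    simp only [hg]; ring
  -- strong duality equality
  have hstrong : (1/2) * (wstar ⬝ᵥ wstar) + ρ * ∑ i, ζstar i
      = (∑ i, zstar i) - (1/2) * (wstar ⬝ᵥ wstar) := by
    have hsum : ∑ i, (zstar i * g i + ρ * ζstar i) = 0 :=
      Finset.sum_eq_zero fun i _ => hcomp i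
    rw [Finset.sum_add_distrib, ← Finset.mul_sum] at hsum
    have : wstar ⬝ᵥ wstar = (∑ i, zstar i * g i) + ∑ i, zstar i := by
      rw [hww]; rw [← Finset.sum_add_distrib]
      exact Finset.sum_congr rfl fun i _ => by ring
    linarith
  -- weak duality
  intro w ζ hfw hfζ
  rw [hstrong]
  have hcauchy : 0 ≤ (w - wstar) ⬝ᵥ (w - wstar) :=
    Finset.sum_nonneg fun j _ => mul_self_nonneg _
  have hcs : wstar ⬝ᵥ w ≤ (1/2) * (w ⬝ᵥ w) + (1/2) * (wstar ⬝ᵥ wstar) := by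
    have : (w - wstar) ⬝ᵥ (w - wstar)
        = w ⬝ᵥ w - 2 * (wstar ⬝ᵥ w) + wstar ⬝ᵥ wstar := by
      simp [sub_dotProduct, dotProduct_sub, dotProduct_comm w wstar]
      ring
    rw [this] at hcauchy; linarith
  have hwd : wstar ⬝ᵥ w = ∑ i, zstar i * (y i * (φ i ⬝ᵥ w)) := by
    conv_lhs => rw [hw, sum_dot]
    refine Finset.sum_congr rfl fun i _ => ?_
    simp [smul_dotProduct, smul_eq_mul, mul_assoc]
  have hlb : (∑ i, zstar i) - ∑ i, zstar i * ζ i ≤ wstar ⬝ᵥ w := by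
    rw [hwd, ← Finset.sum_sub_distrib]
    refine Finset.sum_le_sum fun i _ => ?_
    have h1 := hfw i
    have h2 := (hbox i).1
    nlinarith
  have hslack : ∑ i, zstar i * ζ i ≤ ρ * ∑ i, ζ i := by
    rw [Finset.mul_sum]
    refine Finset.sum_le_sum fun i _ => ?_
    have := (hbox i).2
    have := hfζ i
    nlinarith
  linarith
end
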